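/- arXiv:2401.15364 — 8 statements merged into one kernel-verified Lean document; each statement's English description precedes it below -/
import Mathlib

section
/- Let h ∈ ω^ω diverge to infinity. A set X ⊆ 2^ω satisfies the Shelah condition with bound h (for every interval partition I of ω there is φ with φ(n) ⊆ 2^{I_n}, |φ(n)| ≤ h(n), and X ⊆ H_φ) if and only if X satisfies the Shelah condition with bound h' for any other h' diverging to infinity. More precisely: if h, h' ∈ ω^ω and h diverges to infinity, then the condition with bound h' implies the condition with bound h. -/
open Set Filter

/-- The Cantor space `2^ω`. -/
abbrev Cantor : Type := ℕ → Bool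

/-- An interval partition of `ω` into consecutive finite non-empty intervals,
given by its strictly increasing sequence of endpoints: the `n`-th interval is
`[e n, e (n+1))`. -/
structure IntPart : Type where
  e : ℕ → ℕ
  zero : e 0 = 0
  mono : StrictMono e

/-- The Shelah condition with bound `h`: for every interval partition `I` there is
`φ` with `φ n` a set of at most `h n` (restrictions to `I_n` of) binary sequences,
such that every `x ∈ X` agrees on `I_n` with some member of `φ n` for all but
finitely many `n` (i.e. `X ⊆ H_φ`). -/
def ShelahCond (h : ℕ → ℕ) (X : Set Cantor) : Prop :=
  ∀ I : IntPart, ∃ φ : ℕ → Finset Cantor,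
    (∀ n, (φ n).card ≤ h n) ∧
    X ⊆ {x | ∀ᶠ n in atTop, ∃ y ∈ φ n, ∀ k, I.e n ≤ k → k < I.e (n + 1) → x k = y k}

/-- If `h` diverges to infinity, then the Shelah condition with any bound `h'`
implies the Shelah condition with bound `h`. -/
theorem stmt4 (h h' : ℕ → ℕ) (hh : Tendsto h atTop atTop) (X : Set Cantor) :
    ShelahCond h' X → ShelahCond h X := by
  intro hX I
  classical
  have hb : ∀ k, ∃ a, ∀ m ≥ a, h' k ≤ h m := fun k =>
    eventually_atTop.mp (hh.eventually_ge_atTop (h' k))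
  choose N hN using hb
  obtain ⟨g, hg0, hgs⟩ :
      ∃ g : ℕ → ℕ, g 0 = 0 ∧ ∀ n, g (n + 1) = max (g n + 1) (N (n + 1)) :=
    ⟨fun n => Nat.rec (motive := fun _ => ℕ) 0 (fun n gn => max (gn + 1) (N (n + 1))) n,
      rfl, fun n => rfl⟩
  have hgmono : StrictMono g :=
    strictMono_nat_of_lt_succ fun n => by
      rw [hgs n]; exact lt_of_lt_of_le (Nat.lt_succ_self _) (le_max_left _ _)
  have hgN : ∀ n, 1 ≤ n → N n ≤ g n := by
    intro n hn
    cases n with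
    | zero => omega
    | succ n => rw [hgs n]; exact le_max_right _ _
  obtain ⟨φ, hcard, hcov⟩ :=
    hX ⟨fun n => I.e (g n), by simp [hg0, I.zero], I.mono.comp hgmono⟩
  let blk : ℕ → ℕ := fun m => Nat.findGreatest (fun n => g n ≤ m) m
  have hblk1 : ∀ m, g (blk m) ≤ m := fun m =>
    Nat.findGreatest_spec (P := fun n => g n ≤ m) (Nat.zero_le m) (by simp [hg0])
  have hblk2 : ∀ m, m < g (blk m + 1) := by
    intro m
    by_cases hc : blk m + 1 ≤ m
    · by_contra hlt
      exact (Nat.findGreatest_is_greatest (Nat.lt_succ_self _) hc) (Nat.le_of_not_lt hlt)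
    · calc m < blk m + 1 := by omega
        _ ≤ g (blk m + 1) := hgmono.le_apply
  have hblk3 : ∀ n m, g n ≤ m → n ≤ blk m := fun n m hm =>
    Nat.le_findGreatest (le_trans hgmono.le_apply hm) hm
  refine ⟨fun m => if blk m = 0 then ∅ else φ (blk m), ?_, ?_⟩
  · intro m
    by_cases h0 : blk m = 0
    · simp [h0]
    · simp only [h0, if_neg, if_false]
      have h1 : 1 ≤ blk m := Nat.one_le_iff_ne_zero.mpr h0
      calc (φ (blk m)).card ≤ h' (blk m) := hcard _
        _ ≤ h m := hN (blk m) m (le_trans (hgN _ h1) (hblk1 m))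
  · intro x hx
    have hc := hcov hx
    simp only [mem_setOf_eq, eventually_atTop] at hc ⊢
    obtain ⟨a, ha⟩ := hc
    refine ⟨g (max a 1), fun m hm => ?_⟩
    have h1 : max a 1 ≤ blk m := hblk3 _ _ hm
    have hne : blk m ≠ 0 := by omega
    obtain ⟨y, hy, hagree⟩ := ha (blk m) (le_trans (le_max_left _ _) h1)
    refine ⟨y, by simp [hne, hy], fun k hk1 hk2 => ?_⟩
    exact hagree k (le_trans (I.mono.monotone (hblk1 m)) hk1)
      (lt_of_lt_of_le hk2 (I.mono.monotone (hblk2 m)))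
end

section
/- For every b ∈ (ω+1)^ω (with b(n) ≥ 1), Ed_b^⊥ ⪯_T R_b ⪯_T (Ed_b^⊥ ; 𝕀). Consequently b^{aLc}_{b,1} ≤ d(R_b) ≤ max{b^{aLc}_{b,1}, 𝔡} and min{d^{aLc}_{b,1}, 𝔟} ≤ b(R_b) ≤ d^{aLc}_{b,1}. -/
open Cardinal Set Filter

/-- A relational system `⟨X, Y, R⟩`. -/
structure RelSys : Type 1 where
  X : Type
  Y : Type
  R : X → Y → Prop

/-- Tukey connection: `A ⪯_T B`. -/
def Tukey (A B : RelSys) : Prop :=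
  ∃ (φ : A.X → B.X) (ψ : B.Y → A.Y), ∀ x y, B.R (φ x) y → A.R x (ψ y)

/-- The bounding number `𝔟(A)` of a relational system. -/
noncomputable def bnum (A : RelSys) : Cardinal :=
  sInf {c | ∃ F : Set A.X, c = #↥F ∧ ∀ y, ∃ x ∈ F, ¬ A.R x y}

/-- The dominating number `𝔡(A)` of a relational system. -/
noncomputable def dnum (A : RelSys) : Cardinal :=
  sInf {c | ∃ D : Set A.Y, c = #↥D ∧ ∀ x, ∃ y ∈ D, A.R x y}

/-- `f ⊏• (I, h)`. -/
def sqb (I : IntPart) (f h : ℕ → ℕ) : Prop :=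
  ∀ᶠ n in atTop, ∃ k, I.e n ≤ k ∧ k < I.e (n + 1) ∧ f k = h k

/-- `∏ b` for `b ∈ (ω+1)^ω`. -/
def PbE (b : ℕ → ℕ∞) : Type := {f : ℕ → ℕ // ∀ n, (f n : ℕ∞) < b n}

/-- The relational system `R_b = ⟨∏b, 𝕀 × ∏b, ⊏•⟩`. -/
def Rb (b : ℕ → ℕ∞) : RelSys :=
  ⟨PbE b, IntPart × PbE b, fun f p => sqb p.1 f.1 p.2.1⟩

/-- `Ed_b = ⟨∏b, ∏b, ≠^∞⟩`. -/
def Edb (b : ℕ → ℕ∞) : RelSys :=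
  ⟨PbE b, PbE b, fun x y => ∀ᶠ n in atTop, x.1 n ≠ y.1 n⟩

/-- The dual system `Ed_b^⊥`: `y ⊏^⊥ x` iff `¬ (x ≠^∞ y)`. -/
def EdbDual (b : ℕ → ℕ∞) : RelSys :=
  ⟨PbE b, PbE b, fun y x => ¬ (∀ᶠ n in atTop, x.1 n ≠ y.1 n)⟩

/-- `I ⊑ J` on interval partitions: for all but finitely many `n` there is `m`
with `I_m ⊆ J_n`. -/
def ISub (I J : IntPart) : Prop :=
  ∀ᶠ n in atTop, ∃ m, Set.Ico (I.e m) (I.e (m + 1)) ⊆ Set.Ico (J.e n) (J.e (n + 1))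

/-- The relational system `⟨ω^ω, ω^ω, ≤*⟩`. -/
def OmOm : RelSys := ⟨ℕ → ℕ, ℕ → ℕ, fun x y => ∀ᶠ n in atTop, x n ≤ y n⟩

/-! `R_b`-bounds are `Ed_b^⊥`-bounds once the partition is forgotten; conversely, if `f` agrees
with `h` infinitely often, the greedy partition whose every interval contains an agreement point
is the `𝕀`-object that the composed system has to bound. The cardinal inequalities then follow
from these Tukey connections, Blass's estimates `𝔡(A;B) ≤ 𝔡(A)·𝔡(B)` and
`min{𝔟(A), 𝔟(B)} ≤ 𝔟(A;B)`, and `𝕀 ⪯_T ω^ω`. If `b n = 1` infinitely often, `Ed_b` has no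
dominating family and `R_b` has a bound, so both `𝔡(Ed_b)` and `𝔟(R_b)` are the junk value
`sInf ∅ = 0`. -/

namespace RelSys

-- `bnum A` is definitionally `dnum A.dual`, and `EdbDual b` is `(Edb b).dual`.
def dual (A : RelSys) : RelSys := ⟨A.Y, A.X, fun y x => ¬ A.R x y⟩

def comp (A B : RelSys) : RelSys :=
  ⟨A.X × (A.Y → B.X), A.Y × B.Y, fun p q => A.R p.1 q.1 ∧ B.R (p.2 q.1) q.2⟩

variable {A B : RelSys}

theorem dnum_dual_dual (A : RelSys) : dnum A.dual.dual = dnum A := by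
  simp only [dnum, dual, not_not]
  rfl

theorem dnum_le_mk {D : Set A.Y} (hD : ∀ x, ∃ y ∈ D, A.R x y) : dnum A ≤ #D :=
  csInf_le (OrderBot.bddBelow _) ⟨D, rfl, hD⟩

theorem exists_mk_eq_dnum (hA : ∀ x, ∃ y, A.R x y) :
    ∃ D : Set A.Y, #D = dnum A ∧ ∀ x, ∃ y ∈ D, A.R x y := by
  obtain ⟨D, hD, hdom⟩ := csInf_mem (s := {c | ∃ D : Set A.Y, c = #D ∧ ∀ x, ∃ y ∈ D, A.R x y})
    ⟨_, univ, rfl, fun x => (hA x).imp fun y hy => ⟨mem_univ y, hy⟩⟩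
  exact ⟨D, hD.symm, hdom⟩

theorem dnum_eq_zero {x : A.X} (hx : ∀ y, ¬ A.R x y) : dnum A = 0 := by
  refine (congrArg sInf (eq_empty_iff_forall_notMem.2 ?_)).trans Cardinal.sInf_empty
  rintro _ ⟨D, -, hD⟩
  obtain ⟨y, -, hy⟩ := hD x
  exact hx y hy

theorem bnum_eq_zero {y : A.Y} (hy : ∀ x, A.R x y) : bnum A = 0 :=
  dnum_eq_zero (A := A.dual) fun x hx => hx (hy x)

theorem exists_forall_rel_of_mk_lt_bnum {F : Set A.X} (hF : #F < bnum A) :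
    ∃ y, ∀ x ∈ F, A.R x y := by
  by_contra! h
  exact (dnum_le_mk (A := A.dual) h).not_gt hF

theorem le_bnum {κ : Cardinal} (hA : ∀ y, ∃ x, ¬ A.R x y)
    (h : ∀ F : Set A.X, #F < κ → ∃ y, ∀ x ∈ F, A.R x y) : κ ≤ bnum A := by
  obtain ⟨F, hF, hunb⟩ := exists_mk_eq_dnum (A := A.dual) hA
  by_contra! hlt
  obtain ⟨y, hy⟩ := h F (hF.trans_lt hlt)
  obtain ⟨x, hxF, hx⟩ := hunb y
  exact hx (hy x hxF)

theorem Tukey.dual (h : Tukey A B) : Tukey B.dual A.dual := by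
  obtain ⟨φ, ψ, hφψ⟩ := h
  exact ⟨ψ, φ, fun y x hx hR => hx (hφψ x y hR)⟩

theorem Tukey.dnum_le (h : Tukey A B) (hB : ∀ x, ∃ y, B.R x y) : dnum A ≤ dnum B := by
  obtain ⟨φ, ψ, hφψ⟩ := h
  obtain ⟨D, hD, hdom⟩ := exists_mk_eq_dnum hB
  refine (dnum_le_mk (D := ψ '' D) fun x => ?_).trans (mk_image_le.trans hD.le)
  obtain ⟨y, hyD, hy⟩ := hdom (φ x)
  exact ⟨ψ y, mem_image_of_mem ψ hyD, hφψ x y hy⟩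

theorem Tukey.bnum_le (h : Tukey A B) (hA : ∀ y, ∃ x, ¬ A.R x y) : bnum B ≤ bnum A :=
  Tukey.dnum_le (Tukey.dual h) hA

theorem comp_exists_rel (hA : ∀ x, ∃ y, A.R x y) (hB : ∀ x, ∃ y, B.R x y)
    (p : (A.comp B).X) : ∃ q, (A.comp B).R p q := by
  obtain ⟨y, hy⟩ := hA p.1
  obtain ⟨c, hc⟩ := hB (p.2 y)
  exact ⟨(y, c), hy, hc⟩

theorem dnum_comp_le (hA : ∀ x, ∃ y, A.R x y) (hB : ∀ x, ∃ y, B.R x y) :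
    dnum (A.comp B) ≤ dnum A * dnum B := by
  obtain ⟨DA, hDA, hdomA⟩ := exists_mk_eq_dnum hA
  obtain ⟨DB, hDB, hdomB⟩ := exists_mk_eq_dnum hB
  calc dnum (A.comp B) ≤ #(DA ×ˢ DB) := dnum_le_mk fun p => by
        obtain ⟨y, hyD, hy⟩ := hdomA p.1
        obtain ⟨c, hcD, hc⟩ := hdomB (p.2 y)
        exact ⟨(y, c), mk_mem_prod hyD hcD, hy, hc⟩
    _ = dnum A * dnum B := by
        rw [mk_congr (Equiv.Set.prod DA DB), mk_prod, lift_id, lift_id, hDA, hDB]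

theorem min_bnum_le_bnum_comp (hA : ∀ y, ∃ x, ¬ A.R x y) [Nonempty B.X] :
    min (bnum A) (bnum B) ≤ bnum (A.comp B) := by
  refine le_bnum (fun q => ?_) fun F hF => ?_
  · obtain ⟨x, hx⟩ := hA q.1
    exact ⟨(x, fun _ => Classical.arbitrary _), fun h => hx h.1⟩
  obtain ⟨y, hy⟩ := exists_forall_rel_of_mk_lt_bnum
    (mk_image_le.trans_lt (hF.trans_le (min_le_left _ _)) : #(Prod.fst '' F) < bnum A)
  obtain ⟨c, hc⟩ := exists_forall_rel_of_mk_lt_bnum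
    (mk_image_le.trans_lt (hF.trans_le (min_le_right _ _)) : #((fun p => p.2 y) '' F) < bnum B)
  exact ⟨(y, c), fun p hp => ⟨hy _ (mem_image_of_mem _ hp), hc _ (mem_image_of_mem _ hp)⟩⟩

end RelSys

open RelSys

namespace IntPart

theorem le_e (I : IntPart) (n : ℕ) : n ≤ I.e n := I.mono.le_apply

def singletons : IntPart := ⟨id, rfl, strictMono_id⟩

instance : Nonempty IntPart := ⟨singletons⟩

def ofStep (g : ℕ → ℕ) (hg : ∀ a, a < g a) : IntPart :=
  ⟨fun n => g^[n] 0, rfl, strictMono_nat_of_lt_succ fun n => by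
    rw [Function.iterate_succ_apply']
    exact hg _⟩

theorem ofStep_e_succ (g : ℕ → ℕ) (hg : ∀ a, a < g a) (n : ℕ) :
    (ofStep g hg).e (n + 1) = g ((ofStep g hg).e n) :=
  Function.iterate_succ_apply' g n 0

def ofBound (y : ℕ → ℕ) : IntPart :=
  ofStep (fun a => max a (y a) + 1) fun _ => Nat.lt_succ_of_le (le_max_left _ _)

theorem lt_ofBound_e_succ (y : ℕ → ℕ) (n : ℕ) : y ((ofBound y).e n) < (ofBound y).e (n + 1) := by
  rw [ofBound, ofStep_e_succ]
  exact Nat.lt_succ_of_le (le_max_right _ _)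

open Classical in
noncomputable def greedyStep (P : ℕ → Prop) (a : ℕ) : ℕ :=
  if h : ∃ k ≥ a, P k then h.choose + 1 else a + 1

theorem lt_greedyStep (P : ℕ → Prop) (a : ℕ) : a < greedyStep P a := by
  unfold greedyStep
  split_ifs with h
  · exact Nat.lt_succ_of_le h.choose_spec.1
  · exact Nat.lt_succ_self a

noncomputable def greedy (P : ℕ → Prop) : IntPart := ofStep (greedyStep P) (lt_greedyStep P)

theorem exists_mem_Ico_greedyStep {P : ℕ → Prop} {a : ℕ} (h : ∃ k ≥ a, P k) :
    ∃ k ∈ Ico a (greedyStep P a), P k := by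
  refine ⟨h.choose, ⟨h.choose_spec.1, ?_⟩, h.choose_spec.2⟩
  rw [greedyStep, dif_pos h]
  exact Nat.lt_succ_self _

theorem greedy_exists_mem {P : ℕ → Prop} (hP : ∃ᶠ k in atTop, P k) (n : ℕ) :
    ∃ k ∈ Ico ((greedy P).e n) ((greedy P).e (n + 1)), P k := by
  have he : (greedy P).e (n + 1) = greedyStep P ((greedy P).e n) := ofStep_e_succ _ _ n
  rw [he]
  exact exists_mem_Ico_greedyStep (frequently_atTop.1 hP _)

end IntPart

open IntPart

theorem sqb.frequently_eq {I : IntPart} {f h : ℕ → ℕ} (hs : sqb I f h) :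
    ∃ᶠ k in atTop, f k = h k := by
  obtain ⟨M, hM⟩ := eventually_atTop.1 hs
  refine frequently_atTop.2 fun N => ?_
  obtain ⟨k, hk, -, hfk⟩ := hM (max M N) (le_max_left _ _)
  exact ⟨k, (le_max_right M N).trans ((I.le_e _).trans hk), hfk⟩

theorem not_sqb {I : IntPart} {f h : ℕ → ℕ} (hne : ∀ᶠ k in atTop, f k ≠ h k) : ¬ sqb I f h :=
  fun hs => (hs.frequently_eq.and_eventually hne).exists.elim fun _ hk => hk.2 hk.1

theorem sqb_singletons_self (f : ℕ → ℕ) : sqb singletons f f :=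
  Eventually.of_forall fun n => ⟨n, le_rfl, n.lt_succ_self, rfl⟩

theorem sqb_of_ISub {I J : IntPart} {f h : ℕ → ℕ}
    (hI : ∀ m, ∃ k ∈ Ico (I.e m) (I.e (m + 1)), f k = h k) (hIJ : ISub I J) : sqb J f h :=
  hIJ.mono fun _ ⟨m, hm⟩ =>
    let ⟨k, hk, hfk⟩ := hI m
    ⟨k, (hm hk).1, (hm hk).2, hfk⟩

abbrev IntPartSys : RelSys := ⟨IntPart, IntPart, ISub⟩

/-- `I ↦ (k ↦ I.e (k + 1))` works because `[k, I.e (k + 1))` contains the interval `I_k`. -/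
theorem tukey_IntPartSys_OmOm : Tukey IntPartSys OmOm := by
  refine ⟨fun I k => I.e (k + 1), ofBound, fun I y hIy => ?_⟩
  obtain ⟨M, hM⟩ := eventually_atTop.1 hIy
  refine eventually_atTop.2 ⟨M, fun n hn => ⟨(ofBound y).e n, fun k hk => ⟨?_, ?_⟩⟩⟩
  · exact (I.le_e _).trans hk.1
  · calc k < I.e ((ofBound y).e n + 1) := hk.2
      _ ≤ y ((ofBound y).e n) := hM _ (hn.trans ((ofBound y).le_e n))
      _ < (ofBound y).e (n + 1) := lt_ofBound_e_succ y n

theorem exists_not_ISub (J : IntPart) : ∃ I, ¬ ISub I J := by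
  refine ⟨⟨fun n => J.e (2 * n), J.zero, J.mono.comp (strictMono_mul_left_of_pos two_pos)⟩,
    fun h => ?_⟩
  obtain ⟨n, m, hm⟩ := h.exists
  have h₀ := (hm ⟨le_rfl, J.mono (by omega)⟩).1
  have h₁ := (hm ⟨J.mono.monotone (by omega), J.mono (by omega)⟩ : J.e (2 * m + 1) ∈ _).2
  rw [J.mono.le_iff_le] at h₀
  rw [J.mono.lt_iff_lt] at h₁
  omega

theorem aleph0_le_dnum_OmOm : ℵ₀ ≤ dnum OmOm := by
  obtain ⟨D, hD, hdom⟩ :=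
    exists_mk_eq_dnum (A := OmOm) fun x => ⟨x, Eventually.of_forall fun _ => le_rfl⟩
  rw [← hD]
  by_contra! hlt
  have hfin := lt_aleph0_iff_set_finite.1 hlt
  obtain ⟨y, hyD, hy⟩ := hdom fun n => hfin.toFinset.sup (· n) + 1
  obtain ⟨n, hn⟩ := hy.exists
  dsimp only at hn
  have := Finset.le_sup (f := (· n)) (hfin.mem_toFinset.2 hyD)
  omega

theorem not_eventually_ne_iff {α β : Type*} {l : Filter α} {x y : α → β} :
    (¬ ∀ᶠ n in l, x n ≠ y n) ↔ ∃ᶠ n in l, x n = y n := by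
  simp only [not_eventually, not_not]

section Edb

variable {b : ℕ → ℕ∞}

def PbE.zero (hb : ∀ n, 1 ≤ b n) : PbE b :=
  ⟨0, fun n => lt_of_lt_of_le (by simp) (hb n)⟩

theorem PbE.eq_zero_of_eq_one (f : PbE b) {n : ℕ} (hn : b n = 1) : f.1 n = 0 := by
  simpa [hn] using f.2 n

theorem PbE.exists_eventually_ne (hb : ∀ n, 1 ≤ b n) (hb1 : ∀ᶠ n in atTop, 1 < b n) (h : PbE b) :
    ∃ x : PbE b, ∀ᶠ n in atTop, x.1 n ≠ h.1 n := by
  classical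
  refine ⟨⟨fun n => if h.1 n = 0 ∧ 1 < b n then 1 else 0, fun n => ?_⟩, hb1.mono fun n hn => ?_⟩
  · dsimp only
    split_ifs with hn
    · simpa using hn.2
    · exact_mod_cast Order.one_le_iff_pos.1 (hb n)
  · dsimp only
    split_ifs with hn'
    · rw [hn'.1]
      exact one_ne_zero
    · exact fun h0 => hn' ⟨h0.symm, hn⟩

theorem bnum_Rb_eq_zero (hb : ∀ n, 1 ≤ b n) (hb1 : ∃ᶠ n in atTop, b n = 1) : bnum (Rb b) = 0 :=
  bnum_eq_zero (y := (greedy (b · = 1), PbE.zero hb)) fun f => Eventually.of_forall fun n => by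
    obtain ⟨k, hk, hbk⟩ := greedy_exists_mem hb1 n
    exact ⟨k, hk.1, hk.2, f.eq_zero_of_eq_one hbk⟩

theorem dnum_Edb_eq_zero (hb : ∀ n, 1 ≤ b n) (hb1 : ∃ᶠ n in atTop, b n = 1) :
    dnum (Edb b) = 0 :=
  dnum_eq_zero (x := PbE.zero hb) fun y =>
    not_eventually_ne_iff.2 (hb1.mono fun _ hn => (y.eq_zero_of_eq_one hn).symm)

theorem tukey_EdbDual_Rb : Tukey (EdbDual b) (Rb b) :=
  ⟨id, Prod.snd, fun _ _ hp => not_eventually_ne_iff.2 (hp.frequently_eq.mono fun _ h => h.symm)⟩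

theorem tukey_Rb_comp : Tukey (Rb b) ((EdbDual b).comp IntPartSys) :=
  ⟨fun f => (f, fun h => greedy fun k => f.1 k = h.1 k), fun q => (q.2, q.1),
    fun _ _ ⟨hfq, hI⟩ => sqb_of_ISub (greedy_exists_mem
      ((not_eventually_ne_iff.1 hfq).mono fun _ h => h.symm)) hI⟩

end Edb

/-- `Ed_b^⊥ ⪯_T R_b ⪯_T (Ed_b^⊥ ; 𝕀)`; consequently
`𝔟(Ed_b) ≤ 𝔡(R_b) ≤ max{𝔟(Ed_b), 𝔡}` and `min{𝔡(Ed_b), 𝔟} ≤ 𝔟(R_b) ≤ 𝔡(Ed_b)`. -/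
theorem stmt9 (b : ℕ → ℕ∞) (hb : ∀ n, 1 ≤ b n) :
    Tukey (EdbDual b) (Rb b) ∧
    Tukey (Rb b)
      ⟨PbE b × (PbE b → IntPart), PbE b × IntPart,
        fun p q => (EdbDual b).R p.1 q.1 ∧ ISub (p.2 q.1) q.2⟩ ∧
    bnum (Edb b) ≤ dnum (Rb b) ∧
    dnum (Rb b) ≤ max (bnum (Edb b)) (dnum OmOm) ∧
    min (dnum (Edb b)) (bnum OmOm) ≤ bnum (Rb b) ∧
    bnum (Rb b) ≤ dnum (Edb b) := by
  have hRb (f : PbE b) : ∃ p, (Rb b).R f p := ⟨(singletons, f), sqb_singletons_self f.1⟩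
  have hE (x : PbE b) : ∃ y, (EdbDual b).R x y :=
    ⟨x, not_eventually_ne_iff.2 (Frequently.of_forall fun _ => rfl)⟩
  have hI (I : IntPart) : ∃ J, IntPartSys.R I J :=
    ⟨I, Eventually.of_forall fun n => ⟨n, subset_rfl⟩⟩
  have hOm (x : ℕ → ℕ) : ∃ y, OmOm.R x y := ⟨x, Eventually.of_forall fun _ => le_rfl⟩
  refine ⟨tukey_EdbDual_Rb, tukey_Rb_comp, Tukey.dnum_le tukey_EdbDual_Rb hRb, ?_, ?_⟩
  · calc dnum (Rb b) ≤ dnum ((EdbDual b).comp IntPartSys) :=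
          Tukey.dnum_le tukey_Rb_comp (comp_exists_rel hE hI)
      _ ≤ bnum (Edb b) * dnum OmOm :=
          (dnum_comp_le hE hI).trans (mul_le_mul_right (Tukey.dnum_le tukey_IntPartSys_OmOm hOm) _)
      _ ≤ _ := mul_le_max_of_aleph0_le_right aleph0_le_dnum_OmOm
  by_cases hb1 : ∃ᶠ n in atTop, b n = 1
  · simp [bnum_Rb_eq_zero hb hb1, dnum_Edb_eq_zero hb hb1]
  have hflip := PbE.exists_eventually_ne hb
    ((not_frequently.1 hb1).mono fun n hn => (hb n).lt_of_ne' hn)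
  have hRbU (p : (Rb b).Y) : ∃ f, ¬ (Rb b).R f p := (hflip p.2).imp fun _ => not_sqb
  have hEU (y : PbE b) : ∃ x, ¬ (EdbDual b).R x y :=
    (hflip y).imp fun _ hx => not_not.2 (hx.mono fun _ => Ne.symm)
  refine ⟨?_, (Tukey.bnum_le tukey_EdbDual_Rb hEU).trans_eq (dnum_dual_dual (Edb b))⟩
  calc min (dnum (Edb b)) (bnum OmOm) ≤ min (bnum (EdbDual b)) (bnum IntPartSys) :=
        min_le_min (dnum_dual_dual (Edb b)).ge (Tukey.bnum_le tukey_IntPartSys_OmOm exists_not_ISub)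
    _ ≤ bnum ((EdbDual b).comp IntPartSys) := min_bnum_le_bnum_comp hEU
    _ ≤ bnum (Rb b) := Tukey.bnum_le tukey_Rb_comp hRbU
end

section
/- The relational system ω^ω (with eventual domination ≤*) is Tukey below R_ω, i.e., ω^ω ⪯_T R_ω. Hence 𝔟(R_ω) ≤ 𝔟 and 𝔡 ≤ 𝔡(R_ω). -/
open Cardinal Set Filter

/-- The relational system `R_ω = ⟨ω^ω, 𝕀 × ω^ω, ⊏•⟩`. -/
def Romega : RelSys := ⟨ℕ → ℕ, IntPart × (ℕ → ℕ), fun f p => sqb p.1 f p.2⟩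

lemma tukeyOR : Tukey OmOm Romega := by
  refine ⟨fun x k => (Finset.range (k+1)).sup x,
    fun p n => (Finset.range (p.1.e (n+1))).sup p.2, ?_⟩
  rintro x ⟨I, h⟩ hR
  simp only [Romega, sqb] at hR
  show ∀ᶠ n in atTop, x n ≤ (Finset.range (I.e (n+1))).sup h
  filter_upwards [hR] with n hn
  obtain ⟨k, hk1, hk2, hk3⟩ := hn
  have hnk : n ≤ k := le_trans I.mono.le_apply hk1
  calc x n ≤ (Finset.range (k+1)).sup x :=
        Finset.le_sup (Finset.mem_range.mpr (Nat.lt_succ_of_le hnk))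
    _ = h k := hk3
    _ ≤ (Finset.range (I.e (n+1))).sup h := Finset.le_sup (Finset.mem_range.mpr hk2)

lemma bset_nonempty :
    {c | ∃ F : Set OmOm.X, c = #↥F ∧ ∀ y, ∃ x ∈ F, ¬ OmOm.R x y}.Nonempty := by
  refine ⟨#↥(Set.univ : Set OmOm.X), Set.univ, rfl, fun y => ?_⟩
  refine ⟨fun n => y n + 1, Set.mem_univ _, fun h => ?_⟩
  obtain ⟨n, hn⟩ := h.exists
  simp at hn

lemma dset_nonempty :
    {c | ∃ D : Set Romega.Y, c = #↥D ∧ ∀ x, ∃ y ∈ D, Romega.R x y}.Nonempty := by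
  refine ⟨#↥(Set.univ : Set Romega.Y), Set.univ, rfl, fun x => ?_⟩
  refine ⟨⟨⟨id, rfl, strictMono_id⟩, x⟩, Set.mem_univ _, ?_⟩
  show ∀ᶠ n in atTop, ∃ k, n ≤ k ∧ k < n + 1 ∧ x k = x k
  exact Filter.Eventually.of_forall fun n => ⟨n, le_refl n, Nat.lt_succ_self n, rfl⟩

/-- `ω^ω ⪯_T R_ω`; hence `𝔟(R_ω) ≤ 𝔟` and `𝔡 ≤ 𝔡(R_ω)`. -/
theorem stmt10 :
    Tukey OmOm Romega ∧ bnum Romega ≤ bnum OmOm ∧ dnum OmOm ≤ dnum Romega := by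
  obtain ⟨φ, ψ, hT⟩ := tukeyOR
  refine ⟨tukeyOR, ?_, ?_⟩
  · -- bnum
    have hmem := csInf_mem bset_nonempty
    obtain ⟨F, hF, hub⟩ := hmem
    have : bnum Romega ≤ #↥(φ '' F) := by
      apply csInf_le'
      refine ⟨φ '' F, rfl, fun y => ?_⟩
      obtain ⟨x, hxF, hx⟩ := hub (ψ y)
      exact ⟨φ x, Set.mem_image_of_mem φ hxF, fun hr => hx (hT x y hr)⟩
    exact this.trans (Cardinal.mk_image_le.trans hF.ge)
  · -- dnum
    have hmem := csInf_mem dset_nonempty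
    obtain ⟨D, hD, hdom⟩ := hmem
    have : dnum OmOm ≤ #↥(ψ '' D) := by
      apply csInf_le'
      refine ⟨ψ '' D, rfl, fun x => ?_⟩
      obtain ⟨y, hyD, hy⟩ := hdom (φ x)
      exact ⟨ψ y, Set.mem_image_of_mem ψ hyD, hT x y hy⟩
    exact this.trans (Cardinal.mk_image_le.trans hD.ge)
end

section
/- Let b ∈ ω^ω with ∑_{k<ω} 1/b(k) < ∞. Then C_E ⪯_T R_b, where E is the σ-ideal generated by closed measure zero sets. In particular b(R_b) ≤ non(E) and cov(E) ≤ d(R_b). -/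
open Cardinal Set Filter

/-- The uniformity number of a family of sets. -/
noncomputable def nonIdeal {α : Type*} (I : Set (Set α)) : Cardinal :=
  sInf {c | ∃ A : Set α, c = #↥A ∧ A ∉ I}

/-- The covering number of a family of sets. -/
noncomputable def covIdeal {α : Type*} (I : Set (Set α)) : Cardinal :=
  sInf {c | ∃ F : Set (Set α), F ⊆ I ∧ c = #↥F ∧ ⋃₀ F = Set.univ}

/-- `∏ b` for `b ∈ ω^ω`. -/
abbrev Pb (b : ℕ → ℕ) : Type := {f : ℕ → ℕ // ∀ n, f n < b n}

/-- The relational system `R_b = ⟨∏b, 𝕀 × ∏b, ⊏•⟩`. -/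
def RbN (b : ℕ → ℕ) : RelSys :=
  ⟨Pb b, IntPart × Pb b, fun f p => sqb p.1 f.1 p.2.1⟩

/-- The basic cylinder of `∏b` determined by a finite sequence. -/
def cylP (b : ℕ → ℕ) (s : List ℕ) : Set (Pb b) :=
  {x | ∀ i, ∀ h : i < s.length, x.1 i = s.get ⟨i, h⟩}

/-- `A ⊆ ∏b` is null with respect to the product `Lb_b` of the uniform measures
on the `b k`: `A` is covered by the points lying in infinitely many cylinders from
a sequence with summable measures (the cylinder on `s` has measure `∏_{i<|s|} 1/(b i)`). -/
def NullP (b : ℕ → ℕ) (A : Set (Pb b)) : Prop :=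
  ∃ σ : ℕ → List ℕ,
    Summable (fun n => ∏ i ∈ Finset.range (σ n).length, ((b i : ℝ))⁻¹) ∧
    A ⊆ {x | {n | x ∈ cylP b (σ n)}.Infinite}

/-- The σ-ideal `E(∏b)` generated by closed measure-zero subsets of `∏b`. -/
def EId (b : ℕ → ℕ) : Set (Set (Pb b)) :=
  {A | ∃ C : ℕ → Set (Pb b), (∀ n, IsClosed (C n) ∧ NullP b (C n)) ∧ A ⊆ ⋃ n, C n}

noncomputable def Wt (b : ℕ → ℕ) (L : ℕ) : ℝ := ∏ i ∈ Finset.range L, ((b i : ℝ))⁻¹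
lemma Wt_pos {b : ℕ → ℕ} (hb : ∀ n, 0 < b n) (L : ℕ) : 0 < Wt b L :=
  Finset.prod_pos fun i _ => inv_pos.2 (by exact_mod_cast hb i)
lemma Wt_succ (b : ℕ → ℕ) (L : ℕ) : Wt b (L + 1) = Wt b L * ((b L : ℝ))⁻¹ :=
  Finset.prod_range_succ _ _
lemma Wt_zero (b : ℕ → ℕ) : Wt b 0 = 1 := Finset.prod_range_zero _
lemma summable_Wt {b : ℕ → ℕ} (hb : ∀ n, 0 < b n)
    (hsum : Summable (fun k => ((b k : ℝ))⁻¹)) : Summable (Wt b) := by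
  obtain ⟨N, hN⟩ : ∃ N, ∀ k ≥ N, ((b k : ℝ))⁻¹ ≤ 2⁻¹ := by
    have := hsum.tendsto_atTop_zero
    have h2 : (0:ℝ) < 2⁻¹ := by norm_num
    rcases (Filter.eventually_atTop.1 (this.eventually (eventually_le_nhds h2))) with ⟨N, hN⟩
    exact ⟨N, hN⟩
  apply summable_of_ratio_norm_eventually_le (r := 2⁻¹) (by norm_num)
  refine Filter.eventually_atTop.2 ⟨N, fun n hn => ?_⟩
  have h1 : 0 < Wt b n := Wt_pos hb n
  rw [Real.norm_eq_abs, Real.norm_eq_abs, abs_of_pos (Wt_pos hb _), abs_of_pos h1, Wt_succ,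
    mul_comm (2⁻¹ : ℝ)]
  exact mul_le_mul_of_nonneg_left (hN n hn) h1.le


open scoped Classical in
noncomputable def AliveI (b : ℕ → ℕ) (τ : ℕ → List ℕ) (m k : ℕ) (y : ℕ → ℕ) (j : ℕ) : ℝ :=
  if (m ≤ j ∧ k < (τ j).length ∧ ∀ i < k, (τ j).getD i 0 = y i) then Wt b (τ j).length else 0

open scoped Classical in
noncomputable def AliveD (b : ℕ → ℕ) (τ : ℕ → List ℕ) (m k : ℕ) (y : ℕ → ℕ) (d : ℕ) (j : ℕ) : ℝ :=
  if (m ≤ j ∧ k < (τ j).length ∧ (∀ i < k, (τ j).getD i 0 = y i) ∧ (τ j).getD k 0 = d)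
    then Wt b (τ j).length else 0

def stepGood (b : ℕ → ℕ) (τ : ℕ → List ℕ) (m k : ℕ) (y : ℕ → ℕ) : Prop :=
  ∃ d, d < b k ∧ ∑' j, AliveD b τ m k y d j < Wt b (k + 1)

open scoped Classical in
noncomputable def dch (b : ℕ → ℕ) (τ : ℕ → List ℕ) (m k : ℕ) (y : ℕ → ℕ) : ℕ :=
  if h : stepGood b τ m k y then h.choose else 0

noncomputable def Yseq (b : ℕ → ℕ) (τ : ℕ → List ℕ) (m : ℕ) : ℕ → (ℕ → ℕ)
  | 0 => fun _ => 0
  | (k+1) => Function.update (Yseq b τ m k) k (dch b τ m k (Yseq b τ m k))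

section Diag
variable {b : ℕ → ℕ} {τ : ℕ → List ℕ} {m : ℕ}

lemma AliveI_nonneg (hb : ∀ n, 0 < b n) (k : ℕ) (y : ℕ → ℕ) (j : ℕ) :
    0 ≤ AliveI b τ m k y j := by
  unfold AliveI; split
  · exact (Wt_pos hb _).le
  · exact le_rfl

lemma AliveD_nonneg (hb : ∀ n, 0 < b n) (k : ℕ) (y : ℕ → ℕ) (d : ℕ) (j : ℕ) :
    0 ≤ AliveD b τ m k y d j := by
  unfold AliveD; split
  · exact (Wt_pos hb _).le
  · exact le_rfl

lemma AliveI_le_wt (hb : ∀ n, 0 < b n) (k : ℕ) (y : ℕ → ℕ) (j : ℕ) :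
    AliveI b τ m k y j ≤ Wt b (τ j).length := by
  unfold AliveI; split
  · exact le_rfl
  · exact (Wt_pos hb _).le

lemma AliveD_le_wt (hb : ∀ n, 0 < b n) (k : ℕ) (y : ℕ → ℕ) (d : ℕ) (j : ℕ) :
    AliveD b τ m k y d j ≤ Wt b (τ j).length := by
  unfold AliveD; split
  · exact le_rfl
  · exact (Wt_pos hb _).le

lemma summable_AliveI (hb : ∀ n, 0 < b n) (hτ : Summable fun j => Wt b (τ j).length)
    (k : ℕ) (y : ℕ → ℕ) : Summable (AliveI b τ m k y) :=
  Summable.of_nonneg_of_le (AliveI_nonneg hb k y) (AliveI_le_wt hb k y) hτ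

lemma summable_AliveD (hb : ∀ n, 0 < b n) (hτ : Summable fun j => Wt b (τ j).length)
    (k : ℕ) (y : ℕ → ℕ) (d : ℕ) : Summable (AliveD b τ m k y d) :=
  Summable.of_nonneg_of_le (AliveD_nonneg hb k y d) (AliveD_le_wt hb k y d) hτ

open scoped Classical in
lemma sum_AliveD_le (hb : ∀ n, 0 < b n) (k : ℕ) (y : ℕ → ℕ) (j : ℕ) :
    ∑ d ∈ Finset.range (b k), AliveD b τ m k y d j ≤ AliveI b τ m k y j := by
  by_cases hA : m ≤ j ∧ k < (τ j).length ∧ ∀ i < k, (τ j).getD i 0 = y i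
  · have : ∀ d, AliveD b τ m k y d j =
        if (τ j).getD k 0 = d then Wt b (τ j).length else 0 := by
      intro d
      unfold AliveD
      by_cases hd : (τ j).getD k 0 = d
      · rw [if_pos ⟨hA.1, hA.2.1, hA.2.2, hd⟩, if_pos hd]
      · rw [if_neg (fun hc => hd hc.2.2.2), if_neg hd]
    simp only [this]
    rw [Finset.sum_ite_eq (Finset.range (b k)) ((τ j).getD k 0) (fun _ => Wt b (τ j).length)]
    have hI : AliveI b τ m k y j = Wt b (τ j).length := if_pos hA
    rw [hI]
    split
    · exact le_rfl
    · exact (Wt_pos hb _).le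
  · have hI : AliveI b τ m k y j = 0 := if_neg hA
    rw [hI]
    apply Finset.sum_nonpos
    intro d _
    have : AliveD b τ m k y d j = 0 := by
      unfold AliveD
      exact if_neg (fun hc => hA ⟨hc.1, hc.2.1, hc.2.2.1⟩)
    rw [this]

lemma stepGood_of_inv (hb : ∀ n, 0 < b n) (hτ : Summable fun j => Wt b (τ j).length)
    (k : ℕ) (y : ℕ → ℕ) (hinv : ∑' j, AliveI b τ m k y j < Wt b k) :
    stepGood b τ m k y := by
  by_contra hng
  unfold stepGood at hng
  push_neg at hng
  have h1 : ∀ d ∈ Finset.range (b k), Wt b (k+1) ≤ ∑' j, AliveD b τ m k y d j := by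
    intro d hd
    exact hng d (Finset.mem_range.1 hd)
  have h2 : (Finset.range (b k)).card • Wt b (k+1) ≤
      ∑ d ∈ Finset.range (b k), ∑' j, AliveD b τ m k y d j :=
    Finset.card_nsmul_le_sum _ _ _ h1
  have h3 : ∑ d ∈ Finset.range (b k), ∑' j, AliveD b τ m k y d j =
      ∑' j, ∑ d ∈ Finset.range (b k), AliveD b τ m k y d j :=
    (Summable.tsum_finsetSum (fun d _ => summable_AliveD hb hτ k y d)).symm
  have h4 : ∑' j, ∑ d ∈ Finset.range (b k), AliveD b τ m k y d j ≤
      ∑' j, AliveI b τ m k y j := by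
    apply Summable.tsum_le_tsum (sum_AliveD_le hb k y)
    · exact summable_sum fun d _ => summable_AliveD hb hτ k y d
    · exact summable_AliveI hb hτ k y
  have h5 : (Finset.range (b k)).card • Wt b (k+1) = Wt b k := by
    rw [Finset.card_range, nsmul_eq_mul, Wt_succ, ← mul_assoc, mul_comm ((b k : ℝ)),
      mul_assoc, mul_inv_cancel₀ (by exact_mod_cast (hb k).ne'), mul_one]
  have := h5 ▸ (h2.trans (h3 ▸ h4))
  exact absurd (this.trans_lt hinv) (lt_irrefl _)

lemma inv_Yseq (hb : ∀ n, 0 < b n) (hτ : Summable fun j => Wt b (τ j).length)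
    (hm : ∑' i, Wt b (τ (i + m)).length < 1) (k : ℕ) :
    ∑' j, AliveI b τ m k (Yseq b τ m k) j < Wt b k := by
  induction k with
  | zero =>
    rw [Wt_zero]
    classical
    set u : ℕ → ℝ := fun j => if m ≤ j then Wt b (τ j).length else 0 with hu
    have hu_nonneg : ∀ j, 0 ≤ u j := by
      intro j; rw [hu]; dsimp only; split
      · exact (Wt_pos hb _).le
      · exact le_rfl
    have hu_sum : Summable u := by
      apply Summable.of_nonneg_of_le hu_nonneg _ hτ
      intro j; rw [hu]; dsimp only; split
      · exact le_rfl
      · exact (Wt_pos hb _).le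
    have h1 : ∑' j, AliveI b τ m 0 (Yseq b τ m 0) j ≤ ∑' j, u j := by
      apply Summable.tsum_le_tsum _ (summable_AliveI hb hτ _ _) hu_sum
      intro j
      rw [hu]; dsimp only
      unfold AliveI
      split
      · rename_i hc
        rw [if_pos hc.1]
      · split
        · exact (Wt_pos hb _).le
        · exact le_rfl
    have h2 : ∑' j, u j = ∑' i, u (i + m) := by
      have := Summable.sum_add_tsum_nat_add (f := u) m hu_sum
      have hz : ∑ i ∈ Finset.range m, u i = 0 := by
        apply Finset.sum_eq_zero
        intro i hi
        rw [hu]; dsimp only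
        have : i < m := Finset.mem_range.1 hi
        rw [if_neg (by omega)]
      rw [← this, hz, zero_add]
    have h3 : ∑' i, u (i + m) = ∑' i, Wt b (τ (i + m)).length := by
      congr 1
      funext i
      rw [hu]; dsimp only
      rw [if_pos (Nat.le_add_left m i)]
    exact h1.trans_lt (by rw [h2, h3]; exact hm)
  | succ k ih =>
    have hsg : stepGood b τ m k (Yseq b τ m k) := stepGood_of_inv hb hτ k _ ih
    have hspec : (dch b τ m k (Yseq b τ m k)) < b k ∧
        ∑' j, AliveD b τ m k (Yseq b τ m k) (dch b τ m k (Yseq b τ m k)) j < Wt b (k+1) := by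
      unfold dch
      rw [dif_pos hsg]
      exact hsg.choose_spec
    set d := dch b τ m k (Yseq b τ m k) with hdd
    have hpt : ∀ j, AliveI b τ m (k+1) (Yseq b τ m (k+1)) j ≤
        AliveD b τ m k (Yseq b τ m k) d j := by
      intro j
      unfold AliveI AliveD
      split
      · rename_i hc
        rw [if_pos]
        refine ⟨hc.1, Nat.lt_of_succ_lt hc.2.1, ?_, ?_⟩
        · intro i hi
          have := hc.2.2 i (Nat.lt_succ_of_lt hi)
          rw [this]
          show Function.update (Yseq b τ m k) k (dch b τ m k (Yseq b τ m k)) i = Yseq b τ m k i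
          exact Function.update_of_ne (by omega) _ _
        · have := hc.2.2 k (Nat.lt_succ_self k)
          rw [this]
          show Function.update (Yseq b τ m k) k (dch b τ m k (Yseq b τ m k)) k = d
          exact Function.update_self _ _ _
      · split
        · exact (Wt_pos hb _).le
        · exact le_rfl
    calc ∑' j, AliveI b τ m (k+1) (Yseq b τ m (k+1)) j
        ≤ ∑' j, AliveD b τ m k (Yseq b τ m k) d j :=
          Summable.tsum_le_tsum hpt (summable_AliveI hb hτ _ _) (summable_AliveD hb hτ _ _ _)
      _ < Wt b (k+1) := hspec.2

end Diag

lemma Yseq_stable {b : ℕ → ℕ} {τ : ℕ → List ℕ} {m : ℕ} (k i : ℕ) (h : i < k) :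
    Yseq b τ m k i = dch b τ m i (Yseq b τ m i) := by
  induction k with
  | zero => omega
  | succ k ih =>
    show Function.update (Yseq b τ m k) k (dch b τ m k (Yseq b τ m k)) i = _
    rcases Nat.lt_or_ge i k with hik | hik
    · rw [Function.update_of_ne (by omega)]
      exact ih hik
    · have : i = k := by omega
      subst this
      rw [Function.update_self]

set_option maxHeartbeats 2000000 in
theorem diag {b : ℕ → ℕ} (hb : ∀ n, 0 < b n) (τ : ℕ → List ℕ)
    (hτ : Summable fun j => Wt b (τ j).length) :
    ∃ x : Pb b, {j | x ∈ cylP b (τ j)}.Finite := by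
  obtain ⟨m, hm⟩ : ∃ m, ∑' i, Wt b (τ (i + m)).length < 1 := by
    have h0 := tendsto_sum_nat_add (fun j => Wt b (τ j).length)
    have h1 := h0.eventually (gt_mem_nhds (zero_lt_one (α := ℝ)))
    rcases Filter.eventually_atTop.1 h1 with ⟨m, hm⟩
    exact ⟨m, hm m le_rfl⟩
  have hsg : ∀ k, stepGood b τ m k (Yseq b τ m k) :=
    fun k => stepGood_of_inv hb hτ k _ (inv_Yseq hb hτ hm k)
  have dspec : ∀ k, dch b τ m k (Yseq b τ m k) < b k ∧
      ∑' j, AliveD b τ m k (Yseq b τ m k) (dch b τ m k (Yseq b τ m k)) j < Wt b (k + 1) := by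
    intro k
    unfold dch
    rw [dif_pos (hsg k)]
    exact (hsg k).choose_spec
  refine ⟨⟨fun i => dch b τ m i (Yseq b τ m i), fun i => (dspec i).1⟩, ?_⟩
  apply Set.Finite.subset (Set.finite_Iio m)
  intro j hj
  simp only [Set.mem_Iio]
  by_contra hjm
  push_neg at hjm
  set x : Pb b := ⟨fun i => dch b τ m i (Yseq b τ m i), fun i => (dspec i).1⟩ with hx
  have hcyl : ∀ i (h : i < (τ j).length), (τ j).getD i 0 = x.1 i := by
    intro i h
    rw [List.getD_eq_getElem _ _ h]
    exact (hj i h).symm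
  cases hL : (τ j).length with
  | zero =>
    have htail : Summable fun i => Wt b (τ (i + m)).length :=
      (summable_nat_add_iff m).2 hτ
    have h1 : Wt b (τ ((j - m) + m)).length ≤ ∑' i, Wt b (τ (i + m)).length :=
      Summable.le_tsum htail (j - m) (fun i _ => (Wt_pos hb _).le)
    rw [show (j - m) + m = j by omega, hL, Wt_zero] at h1
    exact absurd (h1.trans_lt hm) (lt_irrefl _)
  | succ k =>
    set d := dch b τ m k (Yseq b τ m k) with hd
    have hcond : AliveD b τ m k (Yseq b τ m k) d j = Wt b (τ j).length := by
      unfold AliveD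
      rw [if_pos]
      refine ⟨hjm, by omega, ?_, ?_⟩
      · intro i hi
        rw [hcyl i (by omega)]
        exact (Yseq_stable k i hi).symm
      · exact hcyl k (by omega)
    have h1 : AliveD b τ m k (Yseq b τ m k) d j ≤
        ∑' j', AliveD b τ m k (Yseq b τ m k) d j' :=
      Summable.le_tsum (summable_AliveD hb hτ k _ d) j (fun i _ => AliveD_nonneg hb k _ d i)
    rw [hcond, hL] at h1
    exact absurd (h1.trans_lt (dspec k).2) (lt_irrefl _)
set_option maxHeartbeats 2000000 in
theorem univ_not_EId {b : ℕ → ℕ} (hb : ∀ n, 0 < b n) : Set.univ ∉ EId b := by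
  rintro ⟨C, hC, hcov⟩
  choose σ hσsum hσsub using fun n => (hC n).2
  have hms : ∀ n : ℕ, ∃ mm, ∑' i, Wt b (σ n (i + mm)).length < (2⁻¹ : ℝ) ^ n := by
    intro n
    have h0 := tendsto_sum_nat_add (fun i => Wt b (σ n i).length)
    have h1 := h0.eventually (gt_mem_nhds (pow_pos (by norm_num : (0:ℝ) < 2⁻¹) n))
    rcases Filter.eventually_atTop.1 h1 with ⟨mm, hmm⟩
    exact ⟨mm, hmm mm le_rfl⟩
  choose ms hmsp using hms
  set τ : ℕ → List ℕ :=
    fun j => σ (Nat.unpair j).1 ((Nat.unpair j).2 + ms (Nat.unpair j).1) with hτdef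
  have hτ : Summable fun j => Wt b (τ j).length := by
    set F : ℕ × ℕ → ℝ := fun p => Wt b (σ p.1 (p.2 + ms p.1)).length with hF
    have hFsum : Summable F := by
      rw [summable_prod_of_nonneg (fun p => (Wt_pos hb _).le)]
      constructor
      · intro n
        exact (summable_nat_add_iff (ms n)).2 (hσsum n)
      · apply Summable.of_nonneg_of_le (fun n => tsum_nonneg fun i => (Wt_pos hb _).le)
          (fun n => (hmsp n).le)
        exact summable_geometric_of_lt_one (by norm_num) (by norm_num)
    have : (fun j => Wt b (τ j).length) = F ∘ (Nat.pairEquiv.symm) := by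
      funext j
      rfl
    rw [this]
    exact (Nat.pairEquiv.symm.summable_iff).2 hFsum
  obtain ⟨x, hfin⟩ := diag hb τ hτ
  have hxU : x ∈ ⋃ n, C n := hcov (Set.mem_univ x)
  obtain ⟨_, ⟨n, rfl⟩, hxC⟩ := hxU
  have hinf : {i | x ∈ cylP b (σ n i)}.Infinite := hσsub n hxC
  have hS : ({i | x ∈ cylP b (σ n i)} \ Set.Iio (ms n)).Infinite :=
    hinf.diff (Set.finite_Iio _)
  have himg : ((fun i => Nat.pair n (i - ms n)) ''
      ({i | x ∈ cylP b (σ n i)} \ Set.Iio (ms n))).Infinite := by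
    apply hS.image
    intro i hi i' hi' hpair
    have h1 := (Nat.pair_eq_pair.1 hpair).2
    have h2 : ms n ≤ i := by simpa using hi.2
    have h3 : ms n ≤ i' := by simpa using hi'.2
    omega
  have hsub : ((fun i => Nat.pair n (i - ms n)) ''
      ({i | x ∈ cylP b (σ n i)} \ Set.Iio (ms n))) ⊆ {j | x ∈ cylP b (τ j)} := by
    rintro _ ⟨i, hi, rfl⟩
    have h2 : ms n ≤ i := by simpa using hi.2
    show x ∈ cylP b (τ (Nat.pair n (i - ms n)))
    have : τ (Nat.pair n (i - ms n)) = σ n i := by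
      rw [hτdef]
      simp only [Nat.unpair_pair]
      congr 1
      omega
    rw [this]
    exact hi.1
  exact (himg.mono hsub) hfin

def Bprod (b : ℕ → ℕ) (k : ℕ) : ℕ := ∏ i ∈ Finset.range k, b i

noncomputable def tupEnc (b : ℕ → ℕ) (k : ℕ) : (∀ i : Fin k, Fin (b i)) ≃ Fin (Bprod b k) :=
  Fintype.equivFinOfCardEq (by
    rw [Fintype.card_pi]
    simp only [Fintype.card_fin]
    exact Fin.prod_univ_eq_prod_range _ _)

noncomputable def sigList (b : ℕ → ℕ) (h : ℕ → ℕ) (k j : ℕ) : List ℕ :=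
  if hj : j < Bprod b k then
    List.ofFn (fun i : Fin (k + 1) =>
      if hi : (i : ℕ) < k then ((tupEnc b k).symm ⟨j, hj⟩ ⟨i, hi⟩ : ℕ) else h k)
  else
    List.ofFn (fun _ : Fin (Nat.pair k j) => 0)

noncomputable def sigH (b : ℕ → ℕ) (h : ℕ → ℕ) (idx : ℕ) : List ℕ :=
  sigList b h (Nat.unpair idx).1 (Nat.unpair idx).2

lemma sigList_length {b h : ℕ → ℕ} (k j : ℕ) :
    (sigList b h k j).length = if j < Bprod b k then k + 1 else Nat.pair k j := by
  unfold sigList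
  split
  · rw [List.length_ofFn]
  · rw [List.length_ofFn]

lemma Bprod_mul_Wt {b : ℕ → ℕ} (hb : ∀ n, 0 < b n) (k : ℕ) :
    (Bprod b k : ℝ) * Wt b k = 1 := by
  rw [Bprod, Wt, Nat.cast_prod, ← Finset.prod_mul_distrib]
  rw [Finset.prod_congr rfl (fun i _ => mul_inv_cancel₀
    (by exact_mod_cast (hb i).ne' : ((b i : ℝ)) ≠ 0))]
  exact Finset.prod_const_one

set_option maxHeartbeats 1000000 in
lemma sigH_summable {b : ℕ → ℕ} (hb : ∀ n, 0 < b n)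
    (hsum : Summable (fun k => ((b k : ℝ))⁻¹)) (h : ℕ → ℕ) :
    Summable (fun idx => Wt b (sigH b h idx).length) := by
  classical
  set P : ℕ → ℝ := fun idx =>
    if (Nat.unpair idx).2 < Bprod b (Nat.unpair idx).1
      then Wt b ((Nat.unpair idx).1 + 1) else 0 with hP
  have hPsum : Summable P := by
    set G : ℕ × ℕ → ℝ := fun p => if p.2 < Bprod b p.1 then Wt b (p.1 + 1) else 0 with hG
    have hGnn : ∀ p : ℕ × ℕ, 0 ≤ G p := by
      intro p; rw [hG]; dsimp only; split
      · exact (Wt_pos hb _).le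
      · exact le_rfl
    have hGsum : Summable G := by
      rw [summable_prod_of_nonneg hGnn]
      constructor
      · intro k
        apply summable_of_ne_finset_zero (s := Finset.range (Bprod b k))
        intro j hj
        rw [hG]; dsimp only
        rw [if_neg (fun hc => hj (Finset.mem_range.2 hc))]
      · have hrow : ∀ k : ℕ, ∑' j, G (k, j) = ((b k : ℝ))⁻¹ := by
          intro k
          have h1 : ∑' j, G (k, j) = ∑ j ∈ Finset.range (Bprod b k), G (k, j) := by
            apply tsum_eq_sum
            intro j hj
            rw [hG]; dsimp only
            rw [if_neg (fun hc => hj (Finset.mem_range.2 hc))]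
          rw [h1]
          have h2 : ∀ j ∈ Finset.range (Bprod b k), G (k, j) = Wt b (k + 1) := by
            intro j hj
            rw [hG]; dsimp only
            rw [if_pos (Finset.mem_range.1 hj)]
          rw [Finset.sum_congr rfl h2, Finset.sum_const, Finset.card_range, nsmul_eq_mul,
            Wt_succ, ← mul_assoc, Bprod_mul_Wt hb, one_mul]
        have heq : (fun k => ∑' j, G (k, j)) = fun k => ((b k : ℝ))⁻¹ := funext hrow
        rw [heq]
        exact hsum
    have heq2 : P = G ∘ Nat.pairEquiv.symm := by
      funext idx
      rfl
    rw [heq2]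
    exact (Nat.pairEquiv.symm.summable_iff).2 hGsum
  have hle : ∀ idx, Wt b (sigH b h idx).length ≤ P idx + Wt b idx := by
    intro idx
    rw [sigH, sigList_length, hP]
    dsimp only
    by_cases hj : (Nat.unpair idx).2 < Bprod b (Nat.unpair idx).1
    · rw [if_pos hj, if_pos hj]
      exact le_add_of_nonneg_right (Wt_pos hb _).le
    · rw [if_neg hj, if_neg hj, Nat.pair_unpair, zero_add]
  exact Summable.of_nonneg_of_le (fun idx => (Wt_pos hb _).le) hle
    (hPsum.add (summable_Wt hb hsum))

lemma mem_cylP_ofFn {b : ℕ → ℕ} {n : ℕ} (g : Fin n → ℕ) (x : Pb b)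
    (hg : ∀ i : Fin n, x.1 i = g i) : x ∈ cylP b (List.ofFn g) := by
  intro i hi
  have hi' : i < n := by simpa using hi
  rw [List.get_eq_getElem, List.getElem_ofFn]
  exact hg ⟨i, hi'⟩

lemma sigH_mem {b : ℕ → ℕ} {h : ℕ → ℕ} (x : Pb b) (k : ℕ) (hxk : x.1 k = h k) :
    ∃ idx, k ≤ idx ∧ x ∈ cylP b (sigH b h idx) := by
  set t : ∀ i : Fin k, Fin (b i) := fun i => ⟨x.1 i, x.2 i⟩ with ht
  set j : ℕ := (tupEnc b k t : ℕ) with hj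
  have hjlt : j < Bprod b k := (tupEnc b k t).2
  refine ⟨Nat.pair k j, Nat.left_le_pair k j, ?_⟩
  have hsig : sigH b h (Nat.pair k j) = List.ofFn (fun i : Fin (k + 1) =>
      if hi : (i : ℕ) < k then ((tupEnc b k).symm ⟨j, hjlt⟩ ⟨i, hi⟩ : ℕ) else h k) := by
    rw [sigH, Nat.unpair_pair]
    unfold sigList
    rw [dif_pos hjlt]
  rw [hsig]
  apply mem_cylP_ofFn
  intro i
  split
  · rename_i hik
    have hcast : (⟨j, hjlt⟩ : Fin (Bprod b k)) = tupEnc b k t := Fin.ext hj.symm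
    rw [hcast, Equiv.symm_apply_apply]
  · rename_i hik
    have hik' : (i : ℕ) = k := by omega
    rw [hik']
    exact hxk
/-- the `m`-th closed piece of `G(J,h)`. -/
def Cset (b : ℕ → ℕ) (J : IntPart) (h : ℕ → ℕ) (m : ℕ) : Set (Pb b) :=
  {x | ∀ n, m ≤ n → ∃ k, J.e n ≤ k ∧ k < J.e (n + 1) ∧ x.1 k = h k}

lemma Cset_closed (b : ℕ → ℕ) (J : IntPart) (h : ℕ → ℕ) (m : ℕ) :
    IsClosed (Cset b J h m) := by
  have heq : Cset b J h m = ⋂ n, ⋂ (_ : m ≤ n),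
      ⋃ k ∈ Set.Ico (J.e n) (J.e (n + 1)), {x : Pb b | x.1 k = h k} := by
    ext x
    simp only [Cset, Set.mem_setOf_eq, Set.mem_iInter, Set.mem_iUnion, Set.mem_Ico,
      Set.mem_setOf_eq, exists_prop]
    constructor
    · intro hx n hn
      obtain ⟨k, h1, h2, h3⟩ := hx n hn
      exact ⟨k, ⟨h1, h2⟩, h3⟩
    · intro hx n hn
      obtain ⟨k, ⟨h1, h2⟩, h3⟩ := hx n hn
      exact ⟨k, h1, h2, h3⟩
  rw [heq]
  refine isClosed_iInter fun n => isClosed_iInter fun _ => ?_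
  refine (Set.finite_Ico _ _).isClosed_biUnion fun k _ => ?_
  have : {x : Pb b | x.1 k = h k} = (fun x : Pb b => x.1 k) ⁻¹' {h k} := rfl
  rw [this]
  exact IsClosed.preimage ((continuous_apply k).comp continuous_subtype_val)
    isClosed_singleton

lemma Cset_null {b : ℕ → ℕ} (hb : ∀ n, 0 < b n)
    (hsum : Summable (fun k => ((b k : ℝ))⁻¹)) (J : IntPart) (h : ℕ → ℕ) (m : ℕ) :
    NullP b (Cset b J h m) := by
  refine ⟨sigH b h, sigH_summable hb hsum h, ?_⟩
  intro x hx
  apply Set.infinite_of_forall_exists_gt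
  intro a
  set n := max m (a + 1) with hn
  obtain ⟨k, h1, h2, h3⟩ := hx n (le_max_left _ _)
  obtain ⟨idx, hki, hmem⟩ := sigH_mem x k h3
  refine ⟨idx, hmem, ?_⟩
  have h4 : n ≤ J.e n := J.mono.le_apply
  omega

lemma G_mem_EId {b : ℕ → ℕ} (hb : ∀ n, 0 < b n)
    (hsum : Summable (fun k => ((b k : ℝ))⁻¹)) (J : IntPart) (h : ℕ → ℕ) :
    {x : Pb b | sqb J x.1 h} ∈ EId b := by
  refine ⟨Cset b J h, fun m => ⟨Cset_closed b J h m, Cset_null hb hsum J h m⟩, ?_⟩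
  intro x hx
  obtain ⟨m, hm⟩ := Filter.eventually_atTop.1 hx
  exact Set.mem_iUnion.2 ⟨m, hm⟩

lemma EId_mono {b : ℕ → ℕ} {A B : Set (Pb b)} (hAB : A ⊆ B) (hB : B ∈ EId b) :
    A ∈ EId b := by
  obtain ⟨C, h1, h2⟩ := hB
  exact ⟨C, h1, hAB.trans h2⟩

/-- If `∑ 1/(b k) < ∞` then `C_E ⪯_T R_b`; in particular
`𝔟(R_b) ≤ non(E)` and `cov(E) ≤ 𝔡(R_b)`. -/
theorem stmt12 (b : ℕ → ℕ) (hb : ∀ n, 0 < b n)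
    (hsum : Summable (fun k => ((b k : ℝ))⁻¹)) :
    Tukey ⟨Pb b, ↥(EId b), fun x A => x ∈ A.1⟩ (RbN b) ∧
    bnum (RbN b) ≤ nonIdeal (EId b) ∧ covIdeal (EId b) ≤ dnum (RbN b) := by
  have hTukey : Tukey ⟨Pb b, ↥(EId b), fun x A => x ∈ A.1⟩ (RbN b) := by
    refine ⟨fun x => x, fun p =>
      ⟨{x : Pb b | sqb p.1 x.1 p.2.1}, G_mem_EId hb hsum p.1 p.2.1⟩, ?_⟩
    intro x y hR
    exact hR
  refine ⟨hTukey, ?_, ?_⟩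
  · obtain ⟨φ, ψ, hT⟩ := hTukey
    unfold bnum nonIdeal
    have hne : {c | ∃ A : Set (Pb b), c = #A ∧ A ∉ EId b}.Nonempty :=
      ⟨#(Set.univ : Set (Pb b)), ⟨Set.univ, rfl, univ_not_EId hb⟩⟩
    apply le_csInf hne
    rintro c ⟨A, rfl, hA⟩
    have hprop : ∀ y : (RbN b).Y, ∃ x ∈ φ '' A, ¬(RbN b).R x y := by
      intro y
      have hns : ¬ A ⊆ (ψ y).1 := fun hsub => hA (EId_mono hsub (ψ y).2)
      rcases Set.not_subset.1 hns with ⟨x, hxA, hxn⟩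
      exact ⟨φ x, Set.mem_image_of_mem φ hxA, fun hR => hxn (hT x y hR)⟩
    calc sInf {c | ∃ F : Set (RbN b).X, c = #F ∧ ∀ y, ∃ x ∈ F, ¬(RbN b).R x y}
        ≤ #(φ '' A) := csInf_le' ⟨φ '' A, rfl, hprop⟩
      _ ≤ #A := Cardinal.mk_image_le
  · obtain ⟨φ, ψ, hT⟩ := hTukey
    unfold covIdeal dnum
    have hne : {c | ∃ D : Set (RbN b).Y, c = #D ∧ ∀ x, ∃ y ∈ D, (RbN b).R x y}.Nonempty := by
      refine ⟨#(Set.univ : Set (RbN b).Y), Set.univ, rfl, ?_⟩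
      intro f
      refine ⟨(⟨id, rfl, strictMono_id⟩, f), Set.mem_univ _, ?_⟩
      exact Filter.Eventually.of_forall (fun n => ⟨n, le_rfl, Nat.lt_succ_self n, rfl⟩)
    apply le_csInf hne
    rintro c ⟨D, rfl, hD⟩
    have h1 : (fun y : (RbN b).Y => (ψ y).1) '' D ⊆ EId b := by
      rintro _ ⟨y, _, rfl⟩
      exact (ψ y).2
    have h2 : ⋃₀ ((fun y : (RbN b).Y => (ψ y).1) '' D) = Set.univ := by
      apply Set.eq_univ_of_forall
      intro x
      obtain ⟨y, hyD, hR⟩ := hD (φ x)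
      exact ⟨(ψ y).1, ⟨y, hyD, rfl⟩, hT x y hR⟩
    calc sInf {c | ∃ F : Set (Set (Pb b)), F ⊆ EId b ∧ c = #F ∧ ⋃₀ F = Set.univ}
        ≤ #((fun y : (RbN b).Y => (ψ y).1) '' D) :=
          csInf_le' ⟨_, h1, rfl, h2⟩
      _ ≤ #D := Cardinal.mk_image_le
end

section
/- For every dominating family D ⊆ ω^ω, C_MA ⪯_T ∏_{b∈D} R_b. In particular min_{b∈D} b(R_b) ≤ non(MA) and cov(MA) ≤ d(∏_{b∈D} R_b). -/
open Cardinal Set Filter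

/-- Coordinatewise mod-2 addition on the Cantor space. -/
def cadd (x y : Cantor) : Cantor := fun n => Bool.xor (x n) (y n)

/-- Pointwise (Minkowski) sum of two subsets of the Cantor space. -/
def sadd (A B : Set Cantor) : Set Cantor := {z | ∃ a ∈ A, ∃ b ∈ B, z = cadd a b}

/-- The ideal `MA` of meager-additive subsets of `2^ω`. -/
def MA : Set (Set Cantor) := {X | ∀ A : Set Cantor, IsMeagre A → IsMeagre (sadd A X)}

/-!
A meagre set `A ⊆ 2^ω` is chopped by an interval partition `I` and a point `y`: every `a ∈ A`
differs from `y` on almost every interval of `I`; conversely, for fixed `(I, y)` the set of all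
points chopped this way is meagre. Send `x` to its codes `n ↦ x ↾ [n, n + log₂ b(n))` in `∏ b`.
Given `A`, pick `b ∈ D` dominating `n ↦ 2 ^ I.e (n + 1)`, so that the `n`-th code of `x`
determines `x` on `I_n`. If the code of `x` is `⊏• (J, h)`, then almost every interval of `J`
contains an `n` at which `x ↾ I_n` can be read off from `h n`, so on almost every interval of
`I ∘ J` the sum `a + x` differs from a fixed point assembled from `y` and `h`. Hence the sets
`{x | code of x ⊏• y b for all b ∈ D}` are meagre-additive, which is the Tukey connection; the
cardinal inequalities hold for any ideal whose covering system is Tukey below a product.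
-/

namespace RelSys

def IsUnbounded (A : RelSys) (F : Set A.X) : Prop := ∀ y, ∃ x ∈ F, ¬ A.R x y

def IsDominating (A : RelSys) (E : Set A.Y) : Prop := ∀ x, ∃ y ∈ E, A.R x y

def pi {ι : Type} (A : ι → RelSys) : RelSys :=
  ⟨∀ i, (A i).X, ∀ i, (A i).Y, fun x y => ∀ i, (A i).R (x i) (y i)⟩

def ofIdeal {α : Type} (I : Set (Set α)) : RelSys := ⟨α, I, fun x A => x ∈ A.1⟩

lemma bnum_le_mk {A : RelSys} {F : Set A.X} (hF : A.IsUnbounded F) : bnum A ≤ #F :=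
  csInf_le' ⟨F, rfl, hF⟩

lemma IsUnbounded.exists_image_eval {ι : Type} {A : ι → RelSys} {F : Set (pi A).X}
    (hF : (pi A).IsUnbounded F) : ∃ i, (A i).IsUnbounded ((fun x => x i) '' F) := by
  by_contra! h
  simp only [IsUnbounded, not_forall, forall_mem_image, not_exists, not_and,
    not_not] at h
  choose y hy using h
  obtain ⟨x, hxF, hxy⟩ := hF y
  exact hxy fun i => hy i hxF

lemma iInf_bnum_le_mk {ι : Type} {A : ι → RelSys} {F : Set (pi A).X}
    (hF : (pi A).IsUnbounded F) : ⨅ i, bnum (A i) ≤ #F := by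
  obtain ⟨i, hi⟩ := hF.exists_image_eval
  calc ⨅ i, bnum (A i) ≤ bnum (A i) := ciInf_le' _ i
    _ ≤ #((fun x => x i) '' F) := bnum_le_mk hi
    _ ≤ #F := mk_image_le

lemma IsDominating.pi {ι : Type} {A : ι → RelSys} {E : ∀ i, Set (A i).Y}
    (hE : ∀ i, (A i).IsDominating (E i)) : (pi A).IsDominating (Set.univ.pi E) := by
  choose y hyE hy using hE
  exact fun x => ⟨fun i => y i (x i), fun i _ => hyE i (x i), fun i => hy i (x i)⟩

lemma isUnbounded_ofIdeal {α : Type} {I : Set (Set α)} (hI : ∀ X ∈ I, ∀ Y ⊆ X, Y ∈ I)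
    {F : Set α} (hF : F ∉ I) : (ofIdeal I).IsUnbounded F := by
  intro X
  by_contra! h
  exact hF (hI X.1 X.2 F h)

lemma covIdeal_le_mk {α : Type} {I : Set (Set α)} {E : Set (ofIdeal I).Y}
    (hE : (ofIdeal I).IsDominating E) : covIdeal I ≤ #E := by
  refine le_trans (csInf_le' ?_) (mk_image_le (f := Subtype.val))
  refine ⟨Subtype.val '' E, ?_, rfl, ?_⟩
  · rintro _ ⟨X, -, rfl⟩
    exact X.2
  · refine eq_univ_of_forall fun x => ?_
    obtain ⟨X, hXE, hxX⟩ := hE x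
    exact ⟨X.1, mem_image_of_mem _ hXE, hxX⟩

end RelSys

open RelSys

lemma Tukey.exists_isUnbounded {A B : RelSys} (h : Tukey A B) {F : Set A.X}
    (hF : A.IsUnbounded F) : ∃ G : Set B.X, B.IsUnbounded G ∧ #G ≤ #F := by
  obtain ⟨φ, ψ, hφψ⟩ := h
  refine ⟨φ '' F, fun y => ?_, mk_image_le⟩
  obtain ⟨x, hxF, hxy⟩ := hF (ψ y)
  exact ⟨φ x, mem_image_of_mem φ hxF, fun h => hxy (hφψ x y h)⟩

lemma Tukey.exists_isDominating {A B : RelSys} (h : Tukey A B) {E : Set B.Y}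
    (hE : B.IsDominating E) : ∃ E' : Set A.Y, A.IsDominating E' ∧ #E' ≤ #E := by
  obtain ⟨φ, ψ, hφψ⟩ := h
  refine ⟨ψ '' E, fun x => ?_, mk_image_le⟩
  obtain ⟨y, hyE, hxy⟩ := hE (φ x)
  exact ⟨ψ y, mem_image_of_mem ψ hyE, hφψ x y hxy⟩

theorem Tukey.iInf_bnum_le_nonIdeal {α ι : Type} {I : Set (Set α)} {B : ι → RelSys}
    (h : Tukey (ofIdeal I) (pi B)) (hI : ∀ X ∈ I, ∀ Y ⊆ X, Y ∈ I)
    (huniv : Set.univ ∉ I) :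
    ⨅ i, bnum (B i) ≤ nonIdeal I := by
  refine le_csInf ⟨_, Set.univ, rfl, huniv⟩ ?_
  rintro _ ⟨F, rfl, hF⟩
  obtain ⟨G, hG, hGF⟩ := h.exists_isUnbounded (isUnbounded_ofIdeal hI hF)
  exact (iInf_bnum_le_mk hG).trans hGF

theorem Tukey.covIdeal_le_dnum {α : Type} {I : Set (Set α)} {B : RelSys}
    (h : Tukey (ofIdeal I) B) (hB : ∃ E, B.IsDominating E) : covIdeal I ≤ dnum B := by
  obtain ⟨E₀, hE₀⟩ := hB
  refine le_csInf ⟨_, E₀, rfl, hE₀⟩ ?_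
  rintro _ ⟨E, rfl, hE⟩
  obtain ⟨E', hE', hE'E⟩ := h.exists_isDominating hE
  exact (covIdeal_le_mk hE').trans hE'E

namespace IntPart

def comp (I J : IntPart) : IntPart :=
  ⟨I.e ∘ J.e, by simp [J.zero, I.zero], I.mono.comp J.mono⟩

lemma exists_lt_e_succ (I : IntPart) (i : ℕ) : ∃ k, i < I.e (k + 1) :=
  ⟨i, I.mono.le_apply.trans_lt (I.mono (lt_add_one i))⟩

open Classical in
noncomputable def index (I : IntPart) (i : ℕ) : ℕ := Nat.find (I.exists_lt_e_succ i)

lemma index_eq_iff (I : IntPart) {i k : ℕ} :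
    I.index i = k ↔ I.e k ≤ i ∧ i < I.e (k + 1) := by
  classical
  rw [index, Nat.find_eq_iff]
  constructor
  · rintro ⟨hlt, hmin⟩
    refine ⟨?_, hlt⟩
    rcases k with _ | k
    · simp [I.zero]
    · exact not_lt.1 (hmin k (lt_add_one k))
  · rintro ⟨hle, hlt⟩
    exact ⟨hlt, fun n hn => not_lt.2 ((I.mono.monotone hn).trans hle)⟩

def DiffersOnAlmostAll (I : IntPart) (y x : Cantor) : Prop :=
  ∀ᶠ k in atTop, ∃ i, I.e k ≤ i ∧ i < I.e (k + 1) ∧ x i ≠ y i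

end IntPart

lemma exists_cylinder_subset {U : Set Cantor} (hU : IsOpen U) {w : Cantor} (hw : w ∈ U) :
    ∃ N, PiNat.cylinder w N ⊆ U := by
  obtain ⟨_, ⟨x, N, rfl⟩, hwx, hxU⟩ :=
    (PiNat.isTopologicalBasis_cylinders fun _ => Bool).exists_subset_of_mem_open hw hU
  exact ⟨N, PiNat.mem_cylinder_iff_eq.1 hwx ▸ hxU⟩

lemma exists_antitone_dense_open_of_isMeagre {X : Type*} [TopologicalSpace X] [BaireSpace X]
    {A : Set X} (hA : IsMeagre A) :
    ∃ V : ℕ → Set X, (∀ k, IsOpen (V k)) ∧ (∀ k, Dense (V k)) ∧ Antitone V ∧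
      ∀ a ∈ A, ∃ k, a ∉ V k := by
  obtain ⟨t, htA, htG, htd⟩ := mem_residual.1 hA
  obtain ⟨f, hfo, rfl⟩ := isGδ_iff_eq_iInter_nat.1 htG
  refine ⟨fun k => ⋂ i ∈ Iic k, f i, fun k => (finite_Iic k).isOpen_biInter
    fun i _ => hfo i, fun k => htd.mono ?_, fun j k hjk => ?_, fun a ha => ?_⟩
  · exact iInter_subset_iInter₂ (Membership.mem (Iic k)) f
  · exact biInter_subset_biInter_left (Iic_subset_Iic.2 hjk)
  · obtain ⟨k, hk⟩ : ∃ k, a ∉ f k := by simpa using fun h => htA h ha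
    exact ⟨k, fun h => hk (mem_iInter₂.1 h k self_mem_Iic)⟩

lemma exists_block_forall_mem_of_finset {V : Set Cantor} (hVo : IsOpen V) (hVd : Dense V)
    (n : ℕ) (F : Finset (Fin n → Bool)) :
    ∃ n' ≥ n, ∃ y : Cantor, ∀ w : Cantor, (fun i : Fin n => w i) ∈ F →
      (∀ i, n ≤ i → i < n' → w i = y i) → w ∈ V := by
  classical
  induction F using Finset.induction with
  | empty => exact ⟨n, le_rfl, fun _ => false, by simp⟩
  | @insert σ F _ IH =>
    obtain ⟨n₁, hn₁, y₁, hy₁⟩ := IH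
    -- a point with prefix `σ` that is good for the prefixes in `F`
    let z : Cantor := fun i => if h : i < n then σ ⟨i, h⟩ else y₁ i
    obtain ⟨v, hvV, hvz⟩ :=
      hVd.exists_mem_open (PiNat.isOpen_cylinder _ z n₁) ⟨z, fun _ _ => rfl⟩
    obtain ⟨N, hN⟩ := exists_cylinder_subset hVo hvV
    refine ⟨max n₁ N, hn₁.trans (le_max_left _ _), v, fun w hwF hwv => ?_⟩
    rcases Finset.mem_insert.1 hwF with hwσ | hwF
    · refine hN fun i hi => ?_
      by_cases hin : i < n
      · rw [hvz i (hin.trans_le hn₁)]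
        simp [z, hin, ← hwσ]
      · exact hwv i (not_lt.1 hin) (hi.trans_le (le_max_right _ _))
    · refine hy₁ w hwF fun i hni hi => ?_
      rw [hwv i hni (hi.trans_le (le_max_left _ _)), hvz i hi]
      simp [z, not_lt.2 hni]

lemma exists_block_forall_mem {V : Set Cantor} (hVo : IsOpen V) (hVd : Dense V) (n : ℕ) :
    ∃ n' > n, ∃ y : Cantor,
      ∀ w : Cantor, (∀ i, n ≤ i → i < n' → w i = y i) → w ∈ V := by
  obtain ⟨n', hn', y, hy⟩ := exists_block_forall_mem_of_finset hVo hVd n Finset.univ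
  exact ⟨n' + 1, Nat.lt_succ_of_le hn', y, fun w hw =>
    hy w (Finset.mem_univ _) fun i h1 h2 => hw i h1 (h2.trans (lt_add_one n'))⟩

lemma exists_intPart_of_isMeagre {A : Set Cantor} (hA : IsMeagre A) :
    ∃ (I : IntPart) (y : Cantor), ∀ a ∈ A, I.DiffersOnAlmostAll y a := by
  obtain ⟨V, hVo, hVd, hVanti, hAV⟩ := exists_antitone_dense_open_of_isMeagre hA
  choose next hnext y hy using fun k => exists_block_forall_mem (hVo k) (hVd k)
  let e : ℕ → ℕ := fun k => Nat.rec 0 (fun k ek => next k ek) k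
  let I : IntPart := ⟨e, rfl, strictMono_nat_of_lt_succ fun k => hnext k (e k)⟩
  refine ⟨I, fun i => y (I.index i) (e (I.index i)) i, fun a ha => ?_⟩
  obtain ⟨k₀, hk₀⟩ := hAV a ha
  refine eventually_atTop.2 ⟨k₀, fun k hk => ?_⟩
  by_contra! hagree
  refine hk₀ (hVanti hk (hy k (e k) a fun i h1 h2 => ?_))
  have hi : I.index i = k := I.index_eq_iff.2 ⟨h1, h2⟩
  simpa [hi] using hagree i h1 h2

lemma isClosed_setOf_exists_ne (y : Cantor) (a b : ℕ) :
    IsClosed {x : Cantor | ∃ i, a ≤ i ∧ i < b ∧ x i ≠ y i} := by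
  have : {x : Cantor | ∃ i, a ≤ i ∧ i < b ∧ x i ≠ y i} =
      ⋃ i ∈ Ico a b, {x | x i ≠ y i} := by
    ext x
    simp [and_assoc]
  rw [this]
  exact (finite_Ico a b).isClosed_biUnion fun i _ =>
    (isClosed_discrete {y i}ᶜ).preimage (continuous_apply (A := fun _ => Bool) i)

lemma IntPart.isMeagre_setOf_differsOnAlmostAll (P : IntPart) (y : Cantor) :
    IsMeagre {x | P.DiffersOnAlmostAll y x} := by
  let D : ℕ → Set Cantor := fun m =>
    {x | ∃ i, P.e m ≤ i ∧ i < P.e (m + 1) ∧ x i ≠ y i}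
  have hD : {x | P.DiffersOnAlmostAll y x} = ⋃ M, ⋂ m ≥ M, D m := by
    ext x
    simp [IntPart.DiffersOnAlmostAll, D, eventually_atTop]
  rw [hD]
  refine isMeagre_iUnion fun M => IsNowhereDense.isMeagre ?_
  have hclosed : IsClosed (⋂ m ≥ M, D m) :=
    isClosed_biInter fun m _ => isClosed_setOf_exists_ne y _ _
  refine hclosed.isNowhereDense_iff.2 (eq_empty_of_forall_notMem fun w hw => ?_)
  obtain ⟨N, hN⟩ := exists_cylinder_subset isOpen_interior hw
  -- copy `y` onto a block of `P` lying beyond `N`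
  let m := max M N
  let v : Cantor := fun i => if P.e m ≤ i ∧ i < P.e (m + 1) then y i else w i
  have hvw : v ∈ PiNat.cylinder w N := fun i hi => by
    have : ¬ P.e m ≤ i := not_le.2 (hi.trans_le ((le_max_right M N).trans P.mono.le_apply))
    simp [v, this]
  obtain ⟨i, h1, h2, hne⟩ := mem_iInter₂.1 (interior_subset (hN hvw)) m (le_max_left M N)
  exact hne (by simp [v, h1, h2])

lemma mem_MA_of_subset {X Y : Set Cantor} (hX : X ∈ MA) (hYX : Y ⊆ X) : Y ∈ MA := by
  intro A hA
  refine (hX A hA).mono ?_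
  rintro _ ⟨a, ha, x, hx, rfl⟩
  exact ⟨a, ha, x, hYX hx, rfl⟩

lemma isMeagre_singleton (z : Cantor) : IsMeagre {z} := by
  refine (IntPart.singletons.isMeagre_setOf_differsOnAlmostAll fun i => !z i).mono ?_
  rintro _ rfl
  exact Eventually.of_forall fun k => ⟨k, le_rfl, lt_add_one k, by simp⟩

lemma univ_notMem_MA : Set.univ ∉ MA := fun h => by
  have hmeagre := h {fun _ => false} (isMeagre_singleton _)
  have huniv : sadd {fun _ => false} Set.univ = Set.univ :=
    eq_univ_of_forall fun w => ⟨_, rfl, w, trivial, by ext; simp [cadd]⟩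
  exact not_isMeagre_of_isOpen isOpen_univ univ_nonempty (huniv ▸ hmeagre)

/-- `x` restricted to `[n, n + ⌊log₂ (b n)⌋)`, read as a binary numeral; it is `< b n`. -/
def code (b : ℕ → ℕ) (x : Cantor) (n : ℕ) : ℕ :=
  Nat.ofBits fun j : Fin (Nat.log 2 (b n)) => x (n + j)

lemma code_lt {b : ℕ → ℕ} (x : Cantor) {n : ℕ} (hb : 0 < b n) : code b x n < b n :=
  (Nat.ofBits_lt_two_pow _).trans_le (Nat.pow_log_le_self 2 hb.ne')

lemma testBit_code {b : ℕ → ℕ} {x : Cantor} {n i : ℕ} (hni : n ≤ i)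
    (hi : i < n + Nat.log 2 (b n)) : (code b x n).testBit (i - n) = x i := by
  rw [code, Nat.testBit_ofBits_lt _ _ (by omega)]
  simp [Nat.add_sub_cancel' hni]

lemma differsOnAlmostAll_cadd_of_sqb_code {I J : IntPart} {y a x : Cantor} {b h : ℕ → ℕ}
    (ha : I.DiffersOnAlmostAll y a) (hb : ∀ᶠ n in atTop, 2 ^ I.e (n + 1) ≤ b n)
    (hx : sqb J (code b x) h) :
    (I.comp J).DiffersOnAlmostAll
      (fun i => xor (y i) ((h (I.index i)).testBit (i - I.index i))) (cadd a x) := by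
  obtain ⟨m₁, hm₁⟩ := eventually_atTop.1 hx
  obtain ⟨k₁, hk₁⟩ := eventually_atTop.1 ha
  obtain ⟨n₁, hn₁⟩ := eventually_atTop.1 hb
  refine eventually_atTop.2 ⟨max m₁ (max k₁ n₁), fun m hm => ?_⟩
  obtain ⟨n, hn1, hn2, hxh⟩ := hm₁ m (le_of_max_le_left hm)
  have hmn : m ≤ n := J.mono.le_apply.trans hn1
  obtain ⟨i, hi1, hi2, hai⟩ := hk₁ n (by omega)
  have hindex : I.index i = n := I.index_eq_iff.2 ⟨hi1, hi2⟩
  -- the block `I_n` lies inside the window coded by `code b x n`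
  have hwin : I.e (n + 1) ≤ Nat.log 2 (b n) :=
    Nat.le_log_of_pow_le one_lt_two (hn₁ n (by omega))
  have hxi : x i = (h n).testBit (i - n) := by
    rw [← hxh, testBit_code (I.mono.le_apply.trans hi1) (by omega)]
  refine ⟨i, (I.mono.monotone hn1).trans hi1,
    hi2.trans_le (I.mono.monotone (Nat.succ_le_of_lt hn2)), ?_⟩
  simpa [cadd, hindex, ← hxi] using hai

lemma setOf_forall_sqb_code_mem_MA {D : Set (ℕ → ℕ)}
    (hdom : ∀ g : ℕ → ℕ, ∃ f ∈ D, ∀ᶠ n in atTop, g n ≤ f n)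
    (y : ∀ b : D, IntPart × Pb b.1) :
    {x : Cantor | ∀ b : D, sqb (y b).1 (code b.1 x) (y b).2.1} ∈ MA := by
  intro A hA
  obtain ⟨I, y₀, hAI⟩ := exists_intPart_of_isMeagre hA
  obtain ⟨b, hbD, hb⟩ := hdom fun n => 2 ^ I.e (n + 1)
  let h := (y ⟨b, hbD⟩).2.1
  refine ((I.comp (y ⟨b, hbD⟩).1).isMeagre_setOf_differsOnAlmostAll
    fun i => xor (y₀ i) ((h (I.index i)).testBit (i - I.index i))).mono ?_
  rintro _ ⟨a, ha, x, hx, rfl⟩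
  exact differsOnAlmostAll_cadd_of_sqb_code (hAI a ha) hb (hx ⟨b, hbD⟩)

theorem tukey_ofIdeal_MA_pi_RbN {D : Set (ℕ → ℕ)} (hpos : ∀ b ∈ D, ∀ n, 0 < b n)
    (hdom : ∀ g : ℕ → ℕ, ∃ f ∈ D, ∀ᶠ n in atTop, g n ≤ f n) :
    Tukey (ofIdeal MA) (pi fun b : D => RbN b.1) :=
  ⟨fun x b => ⟨code b.1 x, fun n => code_lt x (hpos b.1 b.2 n)⟩,
    fun y => ⟨_, setOf_forall_sqb_code_mem_MA hdom y⟩, fun _ _ h => h⟩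

lemma isDominating_univ_RbN (b : ℕ → ℕ) : (RbN b).IsDominating Set.univ := fun f =>
  ⟨(IntPart.singletons, f), mem_univ _,
    Eventually.of_forall fun n => ⟨n, le_rfl, lt_add_one n, rfl⟩⟩

/-- For every dominating family `D ⊆ ω^ω` (of positive functions),
`C_MA ⪯_T ∏_{b∈D} R_b`; in particular `min_{b∈D} 𝔟(R_b) ≤ non(MA)` and
`cov(MA) ≤ 𝔡(∏_{b∈D} R_b)`. -/
theorem stmt14 (D : Set (ℕ → ℕ)) (hpos : ∀ b ∈ D, ∀ n, 0 < b n)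
    (hdom : ∀ g : ℕ → ℕ, ∃ f ∈ D, ∀ᶠ n in atTop, g n ≤ f n) :
    Tukey ⟨Cantor, ↥MA, fun x A => x ∈ A.1⟩
      ⟨∀ b : D, Pb b.1, ∀ b : D, IntPart × Pb b.1,
        fun x y => ∀ b : D, sqb (y b).1 (x b).1 (y b).2.1⟩ ∧
    (⨅ b : D, bnum (RbN b.1)) ≤ nonIdeal MA ∧
    covIdeal MA ≤ dnum ⟨∀ b : D, Pb b.1, ∀ b : D, IntPart × Pb b.1,
        fun x y => ∀ b : D, sqb (y b).1 (x b).1 (y b).2.1⟩ := by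
  have hT := tukey_ofIdeal_MA_pi_RbN hpos hdom
  exact ⟨hT, hT.iInf_bnum_le_nonIdeal (fun _ hX _ => mem_MA_of_subset hX) univ_notMem_MA,
    hT.covIdeal_le_dnum
      ⟨_, IsDominating.pi (A := fun b : D => RbN b.1) fun b => isDominating_univ_RbN b.1⟩⟩
end

section
/- minLc ≤ add(SN): for every dominating family D ⊆ ω^ω and every h ∈ ω^ω diverging to infinity, SN ⪯_T ∏_{b∈D} Lc(b,h), and hence the additivity of the strong measure zero ideal is at least minLc. -/
open Cardinal Set Filter

/-- The additivity number of a family of sets. -/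
noncomputable def addIdeal {α : Type*} (I : Set (Set α)) : Cardinal :=
  sInf {c | ∃ F : Set (Set α), F ⊆ I ∧ c = #↥F ∧ ⋃₀ F ∉ I}

/-- The basic clopen cylinder determined by a finite binary sequence. -/
def cyl (s : List Bool) : Set Cantor := {x | ∀ i, ∀ h : i < s.length, x i = s.get ⟨i, h⟩}

/-- The σ-ideal `SN` of strong measure zero subsets of `2^ω`. -/
def SMZ : Set (Set Cantor) :=
  {X | ∀ f : ℕ → ℕ, ∃ σ : ℕ → List Bool,
    (∀ i, f i ≤ (σ i).length) ∧ X ⊆ ⋃ i, cyl (σ i)}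

/-- The set `S(b,h)` of slaloms: `φ n ⊆ b n` with `|φ n| ≤ h n`. -/
def Slalom (b h : ℕ → ℕ) : Type :=
  {φ : ℕ → Finset ℕ // ∀ n, (φ n).card ≤ h n ∧ ∀ k ∈ φ n, k < b n}

/-- The localization relational system `Lc(b,h) = ⟨∏b, S(b,h), ∈*⟩`. -/
def LcSys (b h : ℕ → ℕ) : RelSys :=
  ⟨Pb b, Slalom b h, fun x φ => ∀ᶠ n in atTop, x.1 n ∈ φ.1 n⟩

/-- `minLc`: the minimum over `b ∈ ω^ω` of `𝔟(Lc(b, id))`. -/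
noncomputable def minLc : Cardinal :=
  ⨅ b : {b : ℕ → ℕ // ∀ n, 0 < b n}, bnum (LcSys b.1 (fun n => n))

/-! A strong measure zero set `X` is sent, for each `b ∈ D`, to the codes `c n < b n` of a cover
of `X` by strings of length `⌊log₂ (b n)⌋` that catches every point of `X` infinitely often.
A family of slaloms `φ_b ∈ S(b,h)` is sent to the set of points lying, for every `b`, infinitely
often in a cylinder coded in `φ_b n`. That set is strong measure zero: given `f`, domination
gives `b ∈ D` whose `⌊log₂ (b n)⌋` exceeds `f` at the `h n + 1` indices reserved for level `n`,
and the at most `h n` strings coded in `φ_b n` are placed at those indices.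

The cardinal inequality then follows because `𝔟` of a product is at least the infimum of the
`𝔟` of its factors, `𝔟` decreases along Tukey connections, and the singletons are strong measure
zero while their union is not. -/

namespace RelSys

def Unbounded (A : RelSys) (F : Set A.X) : Prop := ∀ y, ∃ x ∈ F, ¬ A.R x y

def subsetSys {α : Type} (I : Set (Set α)) : RelSys := ⟨I, I, fun A B => A.1 ⊆ B.1⟩

theorem Unbounded.bnum_le {A : RelSys} {F : Set A.X} (hF : A.Unbounded F) : bnum A ≤ #F :=
  csInf_le' ⟨F, rfl, hF⟩

theorem Unbounded.image {A B : RelSys} {φ : A.X → B.X} {ψ : B.Y → A.Y}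
    (hφψ : ∀ x y, B.R (φ x) y → A.R x (ψ y)) {F : Set A.X} (hF : A.Unbounded F) :
    B.Unbounded (φ '' F) := fun y =>
  let ⟨x, hx, hxy⟩ := hF (ψ y)
  ⟨φ x, mem_image_of_mem φ hx, fun h => hxy (hφψ x y h)⟩

theorem _root_.Tukey.exists_unbounded {A B : RelSys} (hAB : Tukey A B)
    (hA : ∃ F, A.Unbounded F) : ∃ G, B.Unbounded G :=
  let ⟨_, _, hφψ⟩ := hAB
  let ⟨_, hF⟩ := hA
  ⟨_, hF.image hφψ⟩

theorem _root_.Tukey.bnum_le {A B : RelSys} (hAB : Tukey A B) (hA : ∃ F, A.Unbounded F) :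
    bnum B ≤ bnum A := by
  obtain ⟨φ, ψ, hφψ⟩ := hAB
  obtain ⟨F₀, hF₀⟩ := hA
  refine le_csInf ⟨_, F₀, rfl, hF₀⟩ ?_
  rintro _ ⟨F, rfl, hF⟩
  exact (Unbounded.image hφψ hF).bnum_le.trans mk_image_le

theorem Unbounded.exists_eval {ι : Type} {A : ι → RelSys} {F : Set (pi A).X}
    (hF : (pi A).Unbounded F) : ∃ i, (A i).Unbounded ((fun x => x i) '' F) := by
  by_contra! hbdd
  choose y hy using fun i => not_forall.mp (hbdd i)
  obtain ⟨x, hx, hxy⟩ := hF y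
  exact hxy fun i => by_contra fun h => hy i ⟨x i, ⟨x, hx, rfl⟩, h⟩

theorem iInf_bnum_le_bnum_pi {ι : Type} (A : ι → RelSys) (hA : ∃ F, (pi A).Unbounded F) :
    ⨅ i, bnum (A i) ≤ bnum (pi A) := by
  obtain ⟨F₀, hF₀⟩ := hA
  refine le_csInf ⟨_, F₀, rfl, hF₀⟩ ?_
  rintro _ ⟨F, rfl, hF⟩
  obtain ⟨i, hi⟩ := Unbounded.exists_eval hF
  exact (ciInf_le (OrderBot.bddBelow _) i).trans (hi.bnum_le.trans mk_image_le)

variable {α : Type} {I : Set (Set α)}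

theorem unbounded_subsetSys_of_sUnion_notMem (hI : ∀ ⦃A B⦄, A ⊆ B → B ∈ I → A ∈ I) {F : Set (Set α)}
    (hF : F ⊆ I) (hU : ⋃₀ F ∉ I) : (subsetSys I).Unbounded (Subtype.val ⁻¹' F) := by
  intro Y
  by_contra! hY
  exact hU (hI (sUnion_subset fun X hX => hY ⟨X, hF hX⟩ hX) Y.2)

theorem bnum_subsetSys_le_addIdeal (hI : ∀ ⦃A B⦄, A ⊆ B → B ∈ I → A ∈ I)
    (hne : ∃ F ⊆ I, ⋃₀ F ∉ I) : bnum (subsetSys I) ≤ addIdeal I := by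
  obtain ⟨F₀, hF₀, hU₀⟩ := hne
  refine le_csInf ⟨_, F₀, hF₀, rfl, hU₀⟩ ?_
  rintro _ ⟨F, hF, rfl, hU⟩
  exact (unbounded_subsetSys_of_sUnion_notMem hI hF hU).bnum_le.trans
    (mk_preimage_of_injective _ _ Subtype.val_injective)

end RelSys

def decodeBits : ℕ → ℕ → List Bool
  | 0, _ => []
  | L + 1, k => (k % 2 == 1) :: decodeBits L (k / 2)

def encodeBits : List Bool → ℕ
  | [] => 0
  | a :: t => cond a 1 0 + 2 * encodeBits t

theorem length_decodeBits : ∀ L k, (decodeBits L k).length = L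
  | 0, _ => rfl
  | L + 1, k => by simp [decodeBits, length_decodeBits L]

theorem encodeBits_lt : ∀ s : List Bool, encodeBits s < 2 ^ s.length
  | [] => by simp [encodeBits]
  | a :: t => by
    have := encodeBits_lt t
    cases a <;> (simp [encodeBits, pow_succ]; omega)

theorem decodeBits_encodeBits : ∀ s : List Bool, decodeBits s.length (encodeBits s) = s
  | [] => rfl
  | a :: t => by
    have hmod : ((cond a 1 0 + 2 * encodeBits t) % 2 == 1) = a := by
      cases a <;> simp [Nat.add_mul_mod_self_left]
    have hdiv : (cond a 1 0 + 2 * encodeBits t) / 2 = encodeBits t := by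
      cases a <;> simp [Nat.add_mul_div_left]
    simp only [List.length_cons, decodeBits, encodeBits, hmod, hdiv, decodeBits_encodeBits t]

theorem cyl_subset_cyl_take (s : List Bool) (L : ℕ) : cyl s ⊆ cyl (s.take L) := by
  intro x hx i hi
  simpa [List.getElem_take] using hx i (hi.trans_le (List.length_take_le' L s))

namespace SMZ

theorem mono ⦃A B : Set Cantor⦄ (hAB : A ⊆ B) (hB : B ∈ SMZ) : A ∈ SMZ := fun f =>
  let ⟨σ, hlen, hcov⟩ := hB f
  ⟨σ, hlen, hAB.trans hcov⟩

theorem singleton_mem (x : Cantor) : {x} ∈ SMZ := by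
  intro f
  refine ⟨fun i => List.ofFn fun j : Fin (f i) => x j, by simp, ?_⟩
  rintro _ rfl
  exact mem_iUnion.mpr ⟨0, fun i hi => by simp⟩

theorem univ_notMem : (Set.univ : Set Cantor) ∉ SMZ := by
  intro h
  obtain ⟨σ, hlen, hcov⟩ := h (· + 1)
  have hlt (i : ℕ) : i < (σ i).length := hlen i
  let x : Cantor := fun i => !(σ i)[i]'(hlt i)
  obtain ⟨i, hi⟩ := mem_iUnion.mp (hcov (mem_univ x))
  simpa [x] using hi i (hlt i)

/-- Splitting `ℕ` into infinitely many blocks `{Nat.pair k m | m}` and covering `X` once in every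
block makes every point of `X` covered infinitely often. -/
theorem exists_frequently_mem_cyl {X : Set Cantor} (hX : X ∈ SMZ) (f : ℕ → ℕ) :
    ∃ σ : ℕ → List Bool, (∀ i, f i ≤ (σ i).length) ∧
      ∀ x ∈ X, ∃ᶠ n in atTop, x ∈ cyl (σ n) := by
  choose σ hlen hcov using fun k => hX fun m => f (Nat.pair k m)
  refine ⟨fun i => σ i.unpair.1 i.unpair.2, fun i => by simpa using hlen i.unpair.1 i.unpair.2, ?_⟩
  intro x hx
  choose m hm using fun k => mem_iUnion.mp (hcov k hx)
  refine frequently_atTop.mpr fun N => ⟨Nat.pair N (m N), Nat.left_le_pair _ _, ?_⟩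
  simpa using hm N

end SMZ

/-- At level `n`, a number `k < b n` codes the cylinder of the `⌊log₂ (b n)⌋` low bits of `k`;
every binary string of that length has a code. -/
def codeCyl (b : ℕ → ℕ) (n k : ℕ) : Set Cantor := cyl (decodeBits (Nat.log 2 (b n)) k)

theorem SMZ.exists_code {X : Set Cantor} (hX : X ∈ SMZ) {b : ℕ → ℕ} (hb : ∀ n, 0 < b n) :
    ∃ c : Pb b, ∀ x ∈ X, ∃ᶠ n in atTop, x ∈ codeCyl b n (c.1 n) := by
  obtain ⟨σ, hlen, hcov⟩ := SMZ.exists_frequently_mem_cyl hX fun n => Nat.log 2 (b n)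
  have hlen_take (n : ℕ) : ((σ n).take (Nat.log 2 (b n))).length = Nat.log 2 (b n) :=
    List.length_take_of_le (hlen n)
  refine ⟨⟨fun n => encodeBits ((σ n).take (Nat.log 2 (b n))), fun n => ?_⟩, fun x hx => ?_⟩
  · calc encodeBits ((σ n).take (Nat.log 2 (b n)))
        < 2 ^ Nat.log 2 (b n) := by
          simpa only [hlen_take] using encodeBits_lt ((σ n).take (Nat.log 2 (b n)))
      _ ≤ b n := Nat.pow_log_le_self 2 (hb n).ne'
  · refine (hcov x hx).mono fun n hn => ?_
    rw [codeCyl, ← hlen_take n, decodeBits_encodeBits]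
    exact cyl_subset_cyl_take _ _ hn

def slalomSet (b : ℕ → ℕ) (φ : ℕ → Finset ℕ) : Set Cantor :=
  {x | ∃ᶠ n in atTop, ∃ k ∈ φ n, x ∈ codeCyl b n k}

theorem exists_seq_of_lists (τ : ℕ → List (List Bool)) (g : ℕ → ℕ)
    (hlen : ∀ n j (hj : j < (τ n).length), g (Nat.pair n j) ≤ (τ n)[j].length) :
    ∃ σ : ℕ → List Bool, (∀ i, g i ≤ (σ i).length) ∧ ∀ n, ∀ s ∈ τ n, ∃ i, σ i = s := by
  refine ⟨fun i => (τ i.unpair.1)[i.unpair.2]?.getD (List.replicate (g i) true), ?_, ?_⟩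
  · intro i
    by_cases hi : i.unpair.2 < (τ i.unpair.1).length
    · simpa [hi] using hlen _ _ hi
    · simp [hi]
  · intro n s hs
    obtain ⟨j, hj, rfl⟩ := List.mem_iff_getElem.mp hs
    exact ⟨Nat.pair n j, by simp [hj]⟩

theorem slalomSet_subset_cover {b h : ℕ → ℕ} {φ : ℕ → Finset ℕ} (hφ : ∀ n, (φ n).card ≤ h n)
    (g : ℕ → ℕ)
    (hb : ∀ᶠ n in atTop, 2 ^ (Finset.range (h n + 1)).sup (fun j => g (Nat.pair n j)) ≤ b n) :
    ∃ σ : ℕ → List Bool, (∀ i, g i ≤ (σ i).length) ∧ slalomSet b φ ⊆ ⋃ i, cyl (σ i) := by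
  obtain ⟨N, hN⟩ := eventually_atTop.mp hb
  let τ n : List (List Bool) :=
    if N ≤ n then (φ n).toList.map (decodeBits (Nat.log 2 (b n))) else []
  obtain ⟨σ, hσlen, hσ⟩ := exists_seq_of_lists τ g (by
    intro n j hj
    by_cases hn : N ≤ n
    · simp only [τ, hn, if_true, List.length_map, Finset.length_toList] at hj
      simp only [τ, hn, if_true, List.getElem_map, length_decodeBits]
      calc g (Nat.pair n j)
          ≤ (Finset.range (h n + 1)).sup (fun j => g (Nat.pair n j)) :=
            Finset.le_sup (f := fun j => g (Nat.pair n j))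
              (Finset.mem_range.mpr (Nat.lt_succ_of_le ((hj.trans_le (hφ n)).le)))
        _ ≤ Nat.log 2 (b n) := Nat.le_log_of_pow_le one_lt_two (hN n hn)
    · simp [τ, hn] at hj)
  refine ⟨σ, hσlen, fun x hx => ?_⟩
  obtain ⟨n, hn, k, hk, hxk⟩ := frequently_atTop.mp hx N
  obtain ⟨i, hi⟩ := hσ n (decodeBits (Nat.log 2 (b n)) k) (by simpa [τ, hn] using ⟨k, hk, rfl⟩)
  exact mem_iUnion.mpr ⟨i, hi ▸ hxk⟩

theorem iInter_slalomSet_mem_SMZ {D : Set (ℕ → ℕ)}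
    (hdom : ∀ g : ℕ → ℕ, ∃ f ∈ D, ∀ᶠ n in atTop, g n ≤ f n) {h : ℕ → ℕ}
    (y : ∀ b : D, Slalom b.1 h) : (⋂ b : D, slalomSet b.1 (y b).1) ∈ SMZ := by
  intro g
  obtain ⟨b, hbD, hb⟩ :=
    hdom fun n => 2 ^ (Finset.range (h n + 1)).sup (fun j => g (Nat.pair n j))
  obtain ⟨σ, hlen, hcov⟩ := slalomSet_subset_cover (fun n => ((y ⟨b, hbD⟩).2 n).1) g hb
  exact ⟨σ, hlen, (iInter_subset _ ⟨b, hbD⟩).trans hcov⟩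

theorem tukey_subsetSys_SMZ_pi_LcSys {D : Set (ℕ → ℕ)} (hD : ∀ b ∈ D, ∀ n, 0 < b n)
    (hdom : ∀ g : ℕ → ℕ, ∃ f ∈ D, ∀ᶠ n in atTop, g n ≤ f n) (h : ℕ → ℕ) :
    Tukey (RelSys.subsetSys SMZ) (RelSys.pi fun b : D => LcSys b.1 h) := by
  choose c hc using fun (X : SMZ) (b : D) => SMZ.exists_code X.2 (hD b.1 b.2)
  refine ⟨c, fun y => ⟨_, iInter_slalomSet_mem_SMZ hdom y⟩, fun X y hXy x hx => ?_⟩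
  exact mem_iInter.mpr fun b =>
    ((hc X b x hx).and_eventually (hXy b)).mono fun n ⟨hxn, hcn⟩ => ⟨_, hcn, hxn⟩

/-- For every dominating family `D ⊆ ω^ω` (of positive functions) and every
`h ∈ ω^ω` diverging to infinity, `SN ⪯_T ∏_{b∈D} Lc(b,h)`; and hence
`minLc ≤ add(SN)`. -/
theorem stmt16 :
    (∀ D : Set (ℕ → ℕ), (∀ b ∈ D, ∀ n, 0 < b n) →
      (∀ g : ℕ → ℕ, ∃ f ∈ D, ∀ᶠ n in atTop, g n ≤ f n) →
      ∀ h : ℕ → ℕ, Tendsto h atTop atTop →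
        Tukey ⟨↥SMZ, ↥SMZ, fun A B => A.1 ⊆ B.1⟩
          ⟨∀ b : D, Pb b.1, ∀ b : D, Slalom b.1 h,
            fun x φ => ∀ b : D, ∀ᶠ n in atTop, (x b).1 n ∈ ((φ b).1 n)⟩) ∧
    minLc ≤ addIdeal SMZ := by
  refine ⟨fun D hD hdom h _ => tukey_subsetSys_SMZ_pi_LcSys hD hdom h, ?_⟩
  let Dpos : Set (ℕ → ℕ) := {b | ∀ n, 0 < b n}
  have hTukey := tukey_subsetSys_SMZ_pi_LcSys (D := Dpos) (fun _ hb => hb)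
    (fun g => ⟨(g · + 1), fun _ => Nat.succ_pos _, .of_forall fun _ => Nat.le_succ _⟩) id
  obtain ⟨F, hF, hU⟩ : ∃ F ⊆ SMZ, ⋃₀ F ∉ SMZ :=
    ⟨range fun x => {x}, range_subset_iff.mpr SMZ.singleton_mem,
      by rw [sUnion_range, iUnion_of_singleton]; exact SMZ.univ_notMem⟩
  have hunb : ∃ F, (RelSys.subsetSys SMZ).Unbounded F :=
    ⟨_, RelSys.unbounded_subsetSys_of_sUnion_notMem SMZ.mono hF hU⟩
  calc minLc = ⨅ b : Dpos, bnum (LcSys b.1 id) := rfl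
    _ ≤ bnum (RelSys.pi fun b : Dpos => LcSys b.1 id) :=
      RelSys.iInf_bnum_le_bnum_pi _ (hTukey.exists_unbounded hunb)
    _ ≤ bnum (RelSys.subsetSys SMZ) := hTukey.bnum_le hunb
    _ ≤ addIdeal SMZ := RelSys.bnum_subsetSys_le_addIdeal SMZ.mono ⟨F, hF, hU⟩
end

section
/- In the forcing poset P_b (for b ∈ ω^ω), the generic pair (J_gen, h_gen) ∈ 𝕀 × ∏b satisfies: for every f ∈ ∏b in the ground model, f ⊏• (J_gen, h_gen). Equivalently, for each ground-model f ∈ ∏b and each n, the set of conditions (s,t,F) with f ∈ F and |s| > n is dense in P_b. -/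
open Set Filter

/-- A condition `(s, t, F)` of the forcing `P_b`: `s` is a strictly increasing
finite sequence of naturals with `s 0 > 0`, `t` is a finite initial segment of a
member of `∏b`, and `F` is a finite subset of `∏b`. -/
structure PbCond (b : ℕ → ℕ) : Type where
  s : List ℕ
  t : List ℕ
  F : Finset (Pb b)
  hs : List.Chain' (· < ·) s
  hs0 : ∀ h : 0 < s.length, 0 < s.get ⟨0, h⟩
  ht : ∀ i, ∀ h : i < t.length, t.get ⟨i, h⟩ < b i

/-- The order of `P_b`: `q ≤ p` iff `p.s ⊆ q.s`, `p.t ⊆ q.t`, `p.F ⊆ q.F`, and for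
every `f ∈ p.F` and every new index `n` of `q.s` there is
`k ∈ [q.s (n-1), q.s n)` (with `q.s (-1) := 0`) such that `f k = q.t k`. -/
def PbLE (b : ℕ → ℕ) (q p : PbCond b) : Prop :=
  p.s <+: q.s ∧ p.t <+: q.t ∧ p.F ⊆ q.F ∧
  ∀ f ∈ p.F, ∀ n, p.s.length ≤ n → ∀ hn : n < q.s.length,
    ∃ k, ∃ hk : k < q.t.length,
      (if h : n = 0 then 0 else q.s.get ⟨n - 1, by omega⟩) ≤ k ∧
      k < q.s.get ⟨n, hn⟩ ∧ f.1 k = q.t.get ⟨k, hk⟩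

/-! Put `f` into the side condition `F`, then add new intervals one at a time: lay the members
of `F` side by side on a fresh block of `t` beyond everything used so far and close the interval
after that block, so that each member is matched in it. -/

theorem List.getElem_append_map_range' {α : Type*} {l : List α} {g : ℕ → α} {n k : ℕ}
    (hlk : l.length ≤ k) (hk : k < (l ++ (List.range' l.length n).map g).length) :
    (l ++ (List.range' l.length n).map g)[k] = g k := by
  simp only [List.getElem_append_right hlk, List.getElem_map, List.getElem_range']
  congr 1
  omega

variable {b : ℕ → ℕ}

theorem PbLE.trans {p q r : PbCond b} (hrq : PbLE b r q) (hqp : PbLE b q p) : PbLE b r p := by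
  obtain ⟨hsrq, htrq, hFrq, hmatch_rq⟩ := hrq
  obtain ⟨hsqp, htqp, hFqp, hmatch_qp⟩ := hqp
  refine ⟨hsqp.trans hsrq, htqp.trans htrq, hFqp.trans hFrq, fun f hf n hpn hnr => ?_⟩
  by_cases hnq : n < q.s.length
  · obtain ⟨k, hk, hlo, hhi, hfk⟩ := hmatch_qp f hf n hpn hnq
    refine ⟨k, hk.trans_le htrq.length_le, ?_, ?_, ?_⟩
    · split_ifs at hlo ⊢
      · exact hlo
      · simpa only [List.get_eq_getElem, hsrq.getElem] using hlo
    · simpa only [List.get_eq_getElem, hsrq.getElem] using hhi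
    · simpa only [List.get_eq_getElem, htrq.getElem] using hfk
  · exact hmatch_rq f (hFqp hf) n (by omega) hnr

theorem pbLE_of_F_subset {p q : PbCond b} (hs : q.s = p.s) (ht : q.t = p.t) (hF : p.F ⊆ q.F) :
    PbLE b q p :=
  ⟨hs ▸ List.prefix_rfl, ht ▸ List.prefix_rfl, hF,
    fun _ _ _ hpn hn => absurd (hs ▸ hn) (not_lt.2 hpn)⟩

def PbCond.snoc (p : PbCond b) (x : ℕ) (hx0 : 0 < x) (hx : ∀ y ∈ p.s, y < x)
    (g : Pb b) (N : ℕ) : PbCond b where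
  s := p.s ++ [x]
  t := p.t ++ (List.range' p.t.length (N - p.t.length)).map g.1
  F := p.F
  hs := p.hs.append (List.isChain_singleton x) fun y hy _ hz =>
    (hx y (List.mem_of_getLast? hy)).trans_eq (by simpa using hz)
  hs0 h := by
    simp only [List.get_eq_getElem]
    by_cases hps : 0 < p.s.length
    · rw [List.getElem_append_left hps]
      exact p.hs0 hps
    · simpa [List.getElem_append_right (Nat.le_of_not_lt hps)] using hx0
  ht i h := by
    simp only [List.get_eq_getElem]
    by_cases hit : i < p.t.length
    · simpa [List.getElem_append_left hit] using p.ht i hit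
    · rw [List.getElem_append_map_range' (Nat.le_of_not_lt hit)]
      exact g.2 i

theorem PbCond.snoc_pbLE (p : PbCond b) {x : ℕ} (hx0 : 0 < x) (hx : ∀ y ∈ p.s, y < x)
    (g : Pb b) (N : ℕ)
    (hmatch : ∀ f ∈ p.F, ∃ k, (∀ y ∈ p.s, y ≤ k) ∧ p.t.length ≤ k ∧ k < N ∧ k < x ∧
      f.1 k = g.1 k) :
    PbLE b (p.snoc x hx0 hx g N) p := by
  refine ⟨List.prefix_append _ _, List.prefix_append _ _, subset_rfl, fun f hf n hn hn' => ?_⟩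
  obtain ⟨k, hsk, htk, hkN, hkx, hfk⟩ := hmatch f hf
  dsimp only [PbCond.snoc] at hn' ⊢
  obtain rfl : n = p.s.length := by
    simp only [List.length_append, List.length_singleton] at hn'
    omega
  have hkt : k < (p.t ++ (List.range' p.t.length (N - p.t.length)).map g.1).length := by
    simp only [List.length_append, List.length_map, List.length_range']
    omega
  refine ⟨k, hkt, ?_, ?_, ?_⟩
  · by_cases h0 : p.s.length = 0
    · rw [dif_pos h0]
      exact Nat.zero_le k
    · rw [dif_neg h0]
      have hlast : p.s.length - 1 < p.s.length := by omega
      simpa only [List.get_eq_getElem, List.getElem_append_left hlast] using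
        hsk _ (List.getElem_mem hlast)
  · simpa only [List.get_eq_getElem, List.getElem_concat_length rfl] using hkx
  · rw [List.get_eq_getElem, List.getElem_append_map_range' htk, hfk]

theorem exists_pbLE_length_s_succ [Nonempty (Pb b)] (p : PbCond b) :
    ∃ q, PbLE b q p ∧ q.F = p.F ∧ q.s.length = p.s.length + 1 := by
  classical
  set gs := p.F.toList
  set base := p.s.sum + p.t.length
  let g : Pb b :=
    ⟨fun k => (gs.getD (k - base) (Classical.arbitrary _)).1 k,
      fun k => (gs.getD (k - base) (Classical.arbitrary _)).2 k⟩
  have hx : ∀ y ∈ p.s, y < base + gs.length + 1 := fun y hy => by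
    have := List.le_sum_of_mem hy
    omega
  refine ⟨p.snoc _ (Nat.succ_pos _) hx g (base + gs.length),
    p.snoc_pbLE _ hx g _ fun f hf => ?_, rfl, by simp [PbCond.snoc]⟩
  have hi : gs.idxOf f < gs.length := List.idxOf_lt_length_iff.2 (Finset.mem_toList.2 hf)
  refine ⟨base + gs.idxOf f, fun y hy => ?_, by omega, by omega, by omega, ?_⟩
  · have := List.le_sum_of_mem hy
    omega
  · simp [g, List.getElem?_eq_getElem hi]

theorem stmt17_general (b : ℕ → ℕ)
    (f : Pb b) (n : ℕ) (p : PbCond b) :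
    ∃ q : PbCond b, PbLE b q p ∧ f ∈ q.F ∧ n < q.s.length := by
  classical
  have : Nonempty (Pb b) := ⟨f⟩
  suffices ∀ m, ∃ q : PbCond b, PbLE b q p ∧ f ∈ q.F ∧ m ≤ q.s.length from this (n + 1)
  intro m
  induction m with
  | zero =>
    exact ⟨{ p with F := insert f p.F }, pbLE_of_F_subset rfl rfl (Finset.subset_insert f p.F),
      Finset.mem_insert_self f p.F, Nat.zero_le _⟩
  | succ m ih =>
    obtain ⟨q, hqp, hfq, hmq⟩ := ih
    obtain ⟨r, hrq, hF, hlen⟩ := exists_pbLE_length_s_succ q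
    exact ⟨r, hrq.trans hqp, hF ▸ hfq, by omega⟩

/-- Density in `P_b`: for each ground-model `f ∈ ∏b` and each `n`, the set of
conditions `(s, t, F)` with `f ∈ F` and `|s| > n` is dense in `P_b`.  (Hence the
generic pair `(J_gen, h_gen) ∈ 𝕀 × ∏b` satisfies `f ⊏• (J_gen, h_gen)` for every
ground-model `f ∈ ∏b`.) -/
theorem stmt17 (b : ℕ → ℕ) (hb : ∀ n, 0 < b n)
    (f : Pb b) (n : ℕ) (p : PbCond b) :
    ∃ q : PbCond b, PbLE b q p ∧ f ∈ q.F ∧ n < q.s.length :=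
  stmt17_general b f n p
end

section
/- In the poset Q_f (for increasing f ∈ ω^ω): for every condition (σ, N, F) ∈ Q_f and every N' ≥ N, there is σ' ⊇ σ with (σ', N', F) ≤ (σ, N, F); consequently, for every n the sets {(σ,N,F) : n < N}, {(σ,N,F) : n < |σ|} and, for each τ ∈ (2^{<ω})^ω with |τ(i)| = f((i+1)²) for all i, the set {(σ,N,F) : τ ∈ F}, are dense in Q_f. -/
open Set

/-- A condition `(σ, N, F)` of the poset `Q_f`: `σ` is a finite sequence of binary
strings with `|σ i| = f i`, `N < ω`, `F` is a finite set of sequences `τ` of binary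
strings with `|τ n| = f((n+1)²)`, subject to `|F| ≤ N` and `|σ| ≤ N²`. -/
structure QfCond (f : ℕ → ℕ) : Type where
  σ : List (List Bool)
  N : ℕ
  F : Finset (ℕ → List Bool)
  hσ : ∀ i, ∀ h : i < σ.length, (σ.get ⟨i, h⟩).length = f i
  hF : F.card ≤ N
  hσN : σ.length ≤ N ^ 2
  hτ : ∀ τ ∈ F, ∀ n, (τ n).length = f ((n + 1) ^ 2)

/-- The order of `Q_f`: `(σ', N', F') ≤ (σ, N, F)` iff `σ ⊆ σ'`, `N ≤ N'`,
`F ⊆ F'`, and for every `τ ∈ F` and `i ∈ N' \ N` there is `n < |σ'|` with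
`σ' n ⊆ τ i`. -/
def QfLE (f : ℕ → ℕ) (q p : QfCond f) : Prop :=
  p.σ <+: q.σ ∧ p.N ≤ q.N ∧ p.F ⊆ q.F ∧
  ∀ τ ∈ p.F, ∀ i, p.N ≤ i → i < q.N →
    ∃ n, ∃ h : n < q.σ.length, (q.σ.get ⟨n, h⟩) <+: τ i

section

variable {f : ℕ → ℕ}

theorem QfLE.of_N_eq {q p : QfCond f} (hσ : p.σ <+: q.σ) (hN : q.N = p.N) (hF : p.F ⊆ q.F) :
    QfLE f q p :=
  ⟨hσ, hN.ge, hF, fun _ _ _ h₁ h₂ => by omega⟩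

theorem QfLE.refl (p : QfCond f) : QfLE f p p :=
  .of_N_eq (List.prefix_refl _) rfl subset_rfl

theorem QfLE.trans {r q p : QfCond f} (hrq : QfLE f r q) (hqp : QfLE f q p) : QfLE f r p := by
  obtain ⟨hσ₁, hN₁, hF₁, hτ₁⟩ := hrq
  obtain ⟨hσ₂, hN₂, hF₂, hτ₂⟩ := hqp
  refine ⟨hσ₂.trans hσ₁, hN₂.trans hN₁, hF₂.trans hF₁, fun τ hτ i hpi hir => ?_⟩
  rcases lt_or_ge i q.N with hiq | hqi
  · obtain ⟨n, hn, hpre⟩ := hτ₂ τ hτ i hpi hiq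
    refine ⟨n, hn.trans_le hσ₁.length_le, ?_⟩
    simpa only [List.get_eq_getElem, hσ₁.getElem hn] using hpre
  · exact hτ₁ τ (hF₂ hτ) i hqi hir

namespace QfCond

theorem exists_append (p : QfCond f) {N' : ℕ} (hN : p.N ≤ N') (ρ : List (List Bool))
    (hρ : ∀ j (h : j < ρ.length), ρ[j].length = f (p.σ.length + j))
    (hlen : p.σ.length + ρ.length ≤ N' ^ 2) :
    ∃ q : QfCond f, q.σ = p.σ ++ ρ ∧ q.N = N' ∧ q.F = p.F := by
  refine ⟨⟨p.σ ++ ρ, N', p.F, fun i h => ?_, p.hF.trans hN, by simpa using hlen, p.hτ⟩,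
    rfl, rfl, rfl⟩
  simp only [List.get_eq_getElem]
  rcases lt_or_ge i p.σ.length with hi | hi
  · rw [List.getElem_append_left hi]
    simpa using p.hσ i hi
  · rw [List.getElem_append_right hi, hρ]
    congr 1
    omega

/-- The `j`-th string appended is `τ_j(N)` cut down to length `f(|σ| + j)`, where `τ_j`
enumerates `F`; the cut is possible because `|σ| + j < N² + N < (N+1)²`, so
`f(|σ| + j) ≤ f((N+1)²) = |τ_j(N)|`. -/
theorem exists_le_N_succ (hf : Monotone f) (p : QfCond f) :
    ∃ q : QfCond f, QfLE f q p ∧ q.N = p.N + 1 ∧ q.F = p.F := by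
  classical
  let L := p.F.toList
  let ρ := List.ofFn fun j : Fin L.length => (L[j] p.N).take (f (p.σ.length + j))
  have hL : L.length ≤ p.N := by simpa [L] using p.hF
  have hroom : p.σ.length + L.length < (p.N + 1) ^ 2 := by nlinarith [p.hσN]
  have hρ : ∀ j (h : j < ρ.length), ρ[j].length = f (p.σ.length + j) := by
    intro j h
    have hj : j < L.length := by simpa [ρ] using h
    have hτ := p.hτ L[j] (Finset.mem_toList.1 (List.getElem_mem hj)) p.N
    have hmono : f (p.σ.length + j) ≤ f ((p.N + 1) ^ 2) := hf (by omega)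
    simp [ρ, hτ, hmono]
  obtain ⟨q, hqσ, hqN, hqF⟩ :=
    p.exists_append (Nat.le_succ p.N) ρ hρ (by simpa [ρ] using hroom.le)
  refine ⟨q, ⟨hqσ ▸ List.prefix_append _ _, by omega, hqF.ge, ?_⟩, hqN, hqF⟩
  intro τ hτ i hpi hiq
  obtain rfl : i = p.N := by omega
  obtain ⟨j, hj, rfl⟩ := List.getElem_of_mem (Finset.mem_toList.2 hτ)
  refine ⟨p.σ.length + j, by simpa [hqσ, ρ, L] using hj, ?_⟩
  simpa [hqσ, ρ] using List.take_prefix _ _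

theorem exists_le_N_eq (hf : Monotone f) (p : QfCond f) {N' : ℕ} (hN : p.N ≤ N') :
    ∃ q : QfCond f, QfLE f q p ∧ q.N = N' ∧ q.F = p.F := by
  obtain ⟨k, rfl⟩ := Nat.exists_eq_add_of_le hN
  induction k with
  | zero => exact ⟨p, .refl p, rfl, rfl⟩
  | succ k ih =>
    obtain ⟨q, hqp, hqN, hqF⟩ := ih (by omega)
    obtain ⟨r, hrq, hrN, hrF⟩ := exists_le_N_succ hf q
    exact ⟨r, hrq.trans hqp, by omega, hrF.trans hqF⟩

theorem exists_le_length_eq_sq (p : QfCond f) :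
    ∃ q : QfCond f, QfLE f q p ∧ q.σ.length = p.N ^ 2 := by
  let ρ := List.ofFn fun j : Fin (p.N ^ 2 - p.σ.length) =>
    List.replicate (f (p.σ.length + j)) false
  obtain ⟨q, hqσ, hqN, hqF⟩ := p.exists_append le_rfl ρ (by simp [ρ]) (by simp [ρ, p.hσN])
  refine ⟨q, .of_N_eq (hqσ ▸ List.prefix_append _ _) hqN hqF.ge, ?_⟩
  simp [hqσ, ρ, p.hσN]

theorem exists_le_mem_F (p : QfCond f) (hp : p.F.card < p.N) {τ : ℕ → List Bool}
    (hτ : ∀ i, (τ i).length = f ((i + 1) ^ 2)) :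
    ∃ q : QfCond f, QfLE f q p ∧ τ ∈ q.F := by
  classical
  refine ⟨⟨p.σ, p.N, insert τ p.F, p.hσ, (Finset.card_insert_le _ _).trans hp, p.hσN, ?_⟩,
    .of_N_eq (List.prefix_refl _) rfl (Finset.subset_insert _ _), Finset.mem_insert_self _ _⟩
  simp only [Finset.forall_mem_insert]
  exact ⟨hτ, p.hτ⟩

end QfCond

end

/-- Density properties of `Q_f` for increasing `f`: the number `N` can be
increased arbitrarily while keeping `F` (extending `σ` suitably), and
consequently the sets `{(σ,N,F) : n < N}`, `{(σ,N,F) : n < |σ|}` and, for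
suitable `τ`, `{(σ,N,F) : τ ∈ F}` are dense in `Q_f`. -/
theorem stmt18 (f : ℕ → ℕ) (hf : Monotone f) :
    (∀ p : QfCond f, ∀ N' : ℕ, p.N ≤ N' →
      ∃ q : QfCond f, QfLE f q p ∧ q.N = N' ∧ q.F = p.F) ∧
    (∀ n : ℕ, ∀ p : QfCond f, ∃ q : QfCond f, QfLE f q p ∧ n < q.N) ∧
    (∀ n : ℕ, ∀ p : QfCond f, ∃ q : QfCond f, QfLE f q p ∧ n < q.σ.length) ∧
    (∀ τ : ℕ → List Bool, (∀ i, (τ i).length = f ((i + 1) ^ 2)) →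
      ∀ p : QfCond f, ∃ q : QfCond f, QfLE f q p ∧ τ ∈ q.F) := by
  have raise_N (n : ℕ) (p : QfCond f) : ∃ q : QfCond f, QfLE f q p ∧ n < q.N ∧ q.F = p.F := by
    obtain ⟨q, hqp, hqN, hqF⟩ := p.exists_le_N_eq hf (le_max_left p.N (n + 1))
    exact ⟨q, hqp, by omega, hqF⟩
  refine ⟨fun p _ hN => p.exists_le_N_eq hf hN, fun n p => ?_, fun n p => ?_, fun τ hτ p => ?_⟩
  · obtain ⟨q, hqp, hnq, -⟩ := raise_N n p
    exact ⟨q, hqp, hnq⟩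
  · obtain ⟨q, hqp, hnq, -⟩ := raise_N n p
    obtain ⟨r, hrq, hr⟩ := q.exists_le_length_eq_sq
    exact ⟨r, hrq.trans hqp, by nlinarith⟩
  · obtain ⟨q, hqp, hnq, hqF⟩ := raise_N p.N p
    obtain ⟨r, hrq, hτr⟩ := q.exists_le_mem_F (hqF ▸ p.hF.trans_lt hnq) hτ
    exact ⟨r, hrq.trans hqp, hτr⟩
end
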